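/- arXiv:1802.02851 — 6 statements merged into one kernel-verified Lean document; each statement's English description precedes it below -/
import Mathlib

section
/- Let G be a finite group and let S be a product-one free sequence over G of length d(G) (the small Davenport constant). Then Π(S) = G \ {1_G}, i.e., every non-identity element of G is a product of some nonempty sub-multiset of S in some order. -/
/-- The set of products of the terms of the multiset `S`, over all orderings. -/
def piSet {G : Type*} [Group G] (S : Multiset G) : Set G :=
  {g | ∃ l : List G, (l : Multiset G) = S ∧ l.prod = g}

/-- The set of subsequence products: products of nonempty sub-multisets of `S`. -/
def subPiSet {G : Type*} [Group G] (S : Multiset G) : Set G :=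
  {g | ∃ T : Multiset G, T ≤ S ∧ T ≠ 0 ∧ g ∈ piSet T}

/-- `S` is a product-one sequence. -/
def IsProductOne {G : Type*} [Group G] (S : Multiset G) : Prop :=
  (1 : G) ∈ piSet S

/-- `S` is product-one free. -/
def ProductOneFree {G : Type*} [Group G] (S : Multiset G) : Prop :=
  (1 : G) ∉ subPiSet S

/-- `S` is an atom (minimal nontrivial product-one sequence) of the monoid `B(G)`. -/
def IsPOAtom {G : Type*} [Group G] (S : Multiset G) : Prop :=
  S ≠ 0 ∧ IsProductOne S ∧
    ∀ T U : Multiset G, IsProductOne T → IsProductOne U → T + U = S → T = 0 ∨ U = 0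

/-- The large Davenport constant `D(G)`. -/
noncomputable def bigD (G : Type*) [Group G] : ℕ :=
  sSup {n | ∃ S : Multiset G, IsPOAtom S ∧ Multiset.card S = n}

/-- The small Davenport constant `d(G)`. -/
noncomputable def smalld (G : Type*) [Group G] : ℕ :=
  sSup {n | ∃ S : Multiset G, ProductOneFree S ∧ Multiset.card S = n}

/-- The set of factorization lengths of `S` into atoms of `B(G)`. -/
def lengthSet {G : Type*} [Group G] (S : Multiset G) : Set ℕ :=
  {k | ∃ L : List (Multiset G), L.length = k ∧ (∀ A ∈ L, IsPOAtom A) ∧ L.sum = S}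

/-!
Prefix products of a product-one free sequence are pairwise distinct, so its length is less
than `|G|`; in particular `d(G)` is finite and bounds the length of every product-one free
sequence. For `g ≠ 1` the sequence `g⁻¹ S` is therefore not product-one free, and any
product-one subsequence must contain `g⁻¹`. Rotating that product so that `g⁻¹` comes first
writes `g` as an ordered product of the remaining terms, which all lie in `S`.
-/

section

variable {G : Type*} [Group G]

theorem ProductOneFree.card_lt_natCard [Finite G] {S : Multiset G} (hS : ProductOneFree S) :
    Multiset.card S < Nat.card G := by
  set l := S.toList
  have prefix_prod_injective : Function.Injective fun i : Fin (l.length + 1) => (l.take i).prod := by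
    refine Function.Injective.of_lt_imp_ne fun i j hij heq => ?_
    set m := (l.take j).drop i
    have hm : m.prod = 1 := by
      have := List.prod_take_mul_prod_drop (l.take j) i
      rwa [List.take_take, min_eq_left (show (i : ℕ) ≤ j from hij.le), heq, mul_eq_left] at this
    refine hS ⟨m, ?_, ?_, m, rfl, hm⟩
    · calc (m : Multiset G) ≤ l :=
            Multiset.coe_le.mpr ((List.drop_sublist _ _).trans (List.take_sublist _ _)).subperm
        _ = S := S.coe_toList
    · have := j.is_lt
      rw [ne_eq, Multiset.coe_eq_zero, ← List.length_eq_zero_iff, List.length_drop,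
        List.length_take]
      omega
  simpa [l] using Nat.card_le_card_of_injective _ prefix_prod_injective

theorem ProductOneFree.card_le_smalld [Finite G] {S : Multiset G} (hS : ProductOneFree S) :
    Multiset.card S ≤ smalld G :=
  le_csSup ⟨Nat.card G, by rintro _ ⟨T, hT, rfl⟩; exact hT.card_lt_natCard.le⟩ ⟨S, hS, rfl⟩

theorem inv_mem_piSet_of_one_mem_piSet_cons {x : G} {T : Multiset G} (h : 1 ∈ piSet (x ::ₘ T)) :
    x⁻¹ ∈ piSet T := by
  obtain ⟨l, hlT, hl1⟩ := h
  obtain ⟨a, b, rfl⟩ := List.append_of_mem (Multiset.mem_coe.mp (hlT ▸ Multiset.mem_cons_self x T))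
  refine ⟨b ++ a, ?_, ?_⟩
  · apply (Multiset.cons_inj_right x).mp
    rw [← hlT, Multiset.cons_coe, Multiset.coe_eq_coe]
    exact (List.perm_middle.trans (List.perm_append_comm.cons x)).symm
  · rw [List.prod_append, List.prod_cons, mul_eq_one_comm, mul_assoc] at hl1
    rw [List.prod_append]
    exact eq_inv_of_mul_eq_one_right hl1

theorem ProductOneFree.inv_mem_subPiSet_of_not_productOneFree_cons {x : G} {S : Multiset G}
    (hS : ProductOneFree S) (hxS : ¬ ProductOneFree (x ::ₘ S)) (hx : x ≠ 1) :
    x⁻¹ ∈ subPiSet S := by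
  obtain ⟨T, hTS, hT0, hT1⟩ := not_not.mp hxS
  by_cases hxT : x ∈ T
  · obtain ⟨T', rfl⟩ := Multiset.exists_cons_of_mem hxT
    have hT' := inv_mem_piSet_of_one_mem_piSet_cons hT1
    refine ⟨T', (Multiset.cons_le_cons_iff x).mp hTS, ?_, hT'⟩
    rintro rfl
    obtain ⟨l, hl0, hlx⟩ := hT'
    rw [(Multiset.coe_eq_zero l).mp hl0, List.prod_nil, eq_comm, inv_eq_one] at hlx
    exact hx hlx
  · exact absurd ⟨T, (Multiset.le_cons_of_notMem hxT).mp hTS, hT0, hT1⟩ hS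

end

theorem stmt1 {G : Type*} [Group G] [Fintype G] (S : Multiset G) (hS : ProductOneFree S)
    (hcard : Multiset.card S = smalld G) :
    subPiSet S = {g : G | g ≠ 1} := by
  ext g
  refine ⟨fun hg hg1 => hS (hg1 ▸ hg), fun hg => ?_⟩
  have hmaximal : ¬ ProductOneFree (g⁻¹ ::ₘ S) := fun h => by
    simpa [hcard] using h.card_le_smalld
  simpa using hS.inv_mem_subPiSet_of_not_productOneFree_cons hmaximal (inv_ne_one.mpr hg)
end

section
/- Let G be a finite group and S = g₁·…·g_ℓ a sequence over G such that π(S^{[n]}) = π(S) for all n ≥ 1 (where S^{[n]} denotes the n-fold multiset union of S with itself) and π(S) is a subgroup of G. Then π(S) equals the commutator subgroup of the subgroup G₀ = ⟨g₁, …, g_ℓ⟩ generated by the terms of S. -/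
open scoped commutatorElement

section Aux

variable {G : Type*} [Group G]

lemma commSubgroup_self_le (H : Subgroup G) : ⁅H, H⁆ ≤ H :=
  Subgroup.commutator_le.mpr fun g₁ hg₁ g₂ hg₂ => by
    simpa [commutatorElement_def] using
      mul_mem (mul_mem (mul_mem hg₁ hg₂) (inv_mem hg₁)) (inv_mem hg₂)

lemma perm_prod_mul_inv_mem (s : Set G) {l₁ l₂ : List G} (hp : l₁.Perm l₂) :
    (∀ x ∈ l₁, x ∈ s) →
    l₁.prod * l₂.prod⁻¹ ∈ ⁅Subgroup.closure s, Subgroup.closure s⁆ := by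
  induction hp with
  | nil => intro _; simpa using one_mem _
  | @cons x t₁ t₂ h ih =>
    intro hmem
    have hx : x ∈ Subgroup.closure s := Subgroup.subset_closure (hmem x (by simp))
    have hk : t₁.prod * t₂.prod⁻¹ ∈ ⁅Subgroup.closure s, Subgroup.closure s⁆ :=
      ih (fun y hy => hmem y (by simp [hy]))
    have hkcl : t₁.prod * t₂.prod⁻¹ ∈ Subgroup.closure s := commSubgroup_self_le _ hk
    have heq : (x :: t₁).prod * (x :: t₂).prod⁻¹
        = ⁅x, t₁.prod * t₂.prod⁻¹⁆ * (t₁.prod * t₂.prod⁻¹) := by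
      simp only [List.prod_cons, commutatorElement_def]
      group
    rw [heq]
    exact mul_mem (Subgroup.commutator_mem_commutator hx hkcl) hk
  | @swap x y l =>
    intro hmem
    have heq : (y :: x :: l).prod * (x :: y :: l).prod⁻¹ = ⁅y, x⁆ := by
      simp only [List.prod_cons, commutatorElement_def]
      group
    rw [heq]
    exact Subgroup.commutator_mem_commutator
      (Subgroup.subset_closure (hmem y (by simp)))
      (Subgroup.subset_closure (hmem x (by simp)))
  | @trans l₁ l₂ l₃ h₁ h₂ ih₁ ih₂ =>
    intro hmem
    have hmem₂ : ∀ x ∈ l₂, x ∈ s := fun x hx => hmem x (h₁.symm.mem_iff.mp hx)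
    have heq : l₁.prod * l₃.prod⁻¹ = (l₁.prod * l₂.prod⁻¹) * (l₂.prod * l₃.prod⁻¹) := by
      group
    rw [heq]
    exact mul_mem (ih₁ hmem) (ih₂ hmem₂)

lemma toList_prod_mem_piSet (T : Multiset G) : T.toList.prod ∈ piSet T :=
  ⟨T.toList, T.coe_toList, rfl⟩

lemma mem_piSet_cat {a b : G} {T U : Multiset G} (ha : a ∈ piSet T) (hb : b ∈ piSet U) :
    a * b ∈ piSet (T + U) := by
  obtain ⟨l₁, hl₁, rfl⟩ := ha
  obtain ⟨l₂, hl₂, rfl⟩ := hb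
  exact ⟨l₁ ++ l₂, by rw [← Multiset.coe_add, hl₁, hl₂], by rw [List.prod_append]⟩

lemma mem_piSet_cons {a : G} (g : G) {T : Multiset G} (ha : a ∈ piSet T) :
    g * a ∈ piSet (g ::ₘ T) := by
  obtain ⟨l, hl, rfl⟩ := ha
  exact ⟨g :: l, by rw [← Multiset.cons_coe, hl], by rw [List.prod_cons]⟩

end Aux

theorem stmt4 {G : Type*} [Group G] [Fintype G] (S : Multiset G)
    (h1 : ∀ n : ℕ, 1 ≤ n → piSet (n • S) = piSet S)
    (h2 : ∃ H : Subgroup G, piSet S = (H : Set G)) :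
    piSet S = ((⁅Subgroup.closure {x : G | x ∈ S},
      Subgroup.closure {x : G | x ∈ S}⁆ : Subgroup G) : Set G) := by
  classical
  obtain ⟨H, hH⟩ := h2
  have h1S : (1 : G) ∈ piSet S := hH ▸ H.one_mem
  set s : Set G := {x : G | x ∈ S} with hs
  -- every term of S normalizes H
  have hnorm : ∀ g ∈ S, g ∈ Subgroup.normalizer (H : Set G) := by
    intro g hg
    set p := (S.erase g).toList.prod with hpdef
    have hpS : p ∈ piSet (S.erase g) := toList_prod_mem_piSet _
    have h2S : piSet (2 • S) = (H : Set G) := by rw [h1 2 (by norm_num), hH]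
    have hgp : g * p ∈ H := by
      have := mem_piSet_cons g hpS
      rw [Multiset.cons_erase hg, hH] at this
      exact this
    have key : ∀ h ∈ H, g * h * p ∈ H := by
      intro h hh
      have hhS : h ∈ piSet S := by rw [hH]; exact hh
      have hmem : g * (h * p) ∈ piSet (g ::ₘ (S + S.erase g)) :=
        mem_piSet_cons g (mem_piSet_cat hhS hpS)
      have hEq : g ::ₘ (S + S.erase g) = 2 • S := by
        rw [add_comm S, ← Multiset.cons_add, Multiset.cons_erase hg, ← two_nsmul]
      rw [hEq, h2S] at hmem
      rw [← mul_assoc] at hmem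
      exact hmem
    have hconj : ∀ h ∈ (H : Set G), g * h * g⁻¹ ∈ (H : Set G) := by
      intro h hh
      have h1' := key h hh
      have heq : g * h * g⁻¹ = (g * h * p) * (g * p)⁻¹ := by group
      rw [heq]
      exact mul_mem h1' (inv_mem hgp)
    exact Subgroup.mem_normalizer_fintype hconj
  have hclos_norm : Subgroup.closure s ≤ Subgroup.normalizer (H : Set G) :=
    (Subgroup.closure_le _).mpr (fun g hg => hnorm g hg)
  have hconjmem : ∀ x ∈ Subgroup.closure s, ∀ h ∈ H, x * h * x⁻¹ ∈ H := by
    intro x hx h hh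
    exact (Subgroup.mem_normalizer_iff.mp (hclos_norm hx) h).mp hh
  -- base commutators
  have hbase : ∀ g ∈ S, ∀ k ∈ S, ⁅g, k⁆ ∈ H := by
    intro g hg k hk
    by_cases hgk : g = k
    · subst hgk
      have : ⁅g, g⁆ = 1 := by group
      rw [this]; exact one_mem H
    · have hk' : k ∈ S.erase g :=
        (Multiset.mem_erase_of_ne (fun h => hgk h.symm)).mpr hk
      have hg' : g ∈ S.erase k := (Multiset.mem_erase_of_ne hgk).mpr hg
      set r := ((S.erase g).erase k).toList.prod with hrdef
      have hr : r ∈ piSet ((S.erase g).erase k) := toList_prod_mem_piSet _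
      have hr' : r ∈ piSet ((S.erase k).erase g) := by
        rwa [Multiset.erase_comm] at hr
      have hA : g * (k * r) ∈ H := by
        have := mem_piSet_cons g (mem_piSet_cons k hr)
        rw [Multiset.cons_erase hk', Multiset.cons_erase hg, hH] at this
        exact this
      have hB : k * (g * r) ∈ H := by
        have := mem_piSet_cons k (mem_piSet_cons g hr')
        rw [Multiset.cons_erase hg', Multiset.cons_erase hk, hH] at this
        exact this
      have heq : ⁅g, k⁆ = (g * (k * r)) * (k * (g * r))⁻¹ := by
        rw [commutatorElement_def]; group
      rw [heq]
      exact mul_mem hA (inv_mem hB)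
  -- the commutator subgroup is contained in H
  have hcommH : ⁅Subgroup.closure s, Subgroup.closure s⁆ ≤ H := by
    rw [Subgroup.commutator_le]
    intro a ha b hb
    induction ha, hb using Subgroup.closure_induction₂ with
    | mem x y hx hy => exact hbase x hx y hy
    | one_left x hx =>
      have : ⁅(1 : G), x⁆ = 1 := by group
      rw [this]; exact one_mem H
    | one_right x hx =>
      have : ⁅x, (1 : G)⁆ = 1 := by group
      rw [this]; exact one_mem H
    | mul_left x y z hx hy hz hxz hyz =>
      have heq : ⁅x * y, z⁆ = x * ⁅y, z⁆ * x⁻¹ * ⁅x, z⁆ := by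
        simp only [commutatorElement_def]; group
      rw [heq]
      exact mul_mem (hconjmem x hx _ hyz) hxz
    | mul_right y z x hy hz hx hxy hxz =>
      have heq : ⁅x, y * z⁆ = ⁅x, y⁆ * (y * ⁅x, z⁆ * y⁻¹) := by
        simp only [commutatorElement_def]; group
      rw [heq]
      exact mul_mem hxy (hconjmem y hy _ hxz)
    | inv_left x y hx hy hxy =>
      have heq : ⁅x⁻¹, y⁆ = x⁻¹ * ⁅x, y⁆⁻¹ * (x⁻¹)⁻¹ := by
        simp only [commutatorElement_def]; group
      rw [heq]
      exact hconjmem x⁻¹ (inv_mem hx) _ (inv_mem hxy)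
    | inv_right x y hx hy hxy =>
      have heq : ⁅x, y⁻¹⁆ = y⁻¹ * ⁅x, y⁆⁻¹ * (y⁻¹)⁻¹ := by
        simp only [commutatorElement_def]; group
      rw [heq]
      exact hconjmem y⁻¹ (inv_mem hy) _ (inv_mem hxy)
  -- forward inclusion
  have hsub : piSet S ⊆ ↑⁅Subgroup.closure s, Subgroup.closure s⁆ := by
    rintro g ⟨l, hl, rfl⟩
    obtain ⟨l₂, hl₂, hprod₂⟩ := h1S
    have hperm : l.Perm l₂ := Multiset.coe_eq_coe.mp (hl.trans hl₂.symm)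
    have hm : ∀ x ∈ l, x ∈ s := by
      intro x hx
      show x ∈ S
      rw [← hl]
      exact hx
    have := perm_prod_mul_inv_mem s hperm hm
    rwa [hprod₂, inv_one, mul_one] at this
  ext g
  constructor
  · exact fun h => hsub h
  · intro hgK
    rw [hH]
    exact hcommH hgK
end

section
/- Let G be a finite non-abelian group. Then every sequence S over G of length D(G) (the large Davenport constant) has a nontrivial proper product-one sub-multiset, i.e., there exists a nonempty sub-multiset T of S with T ≠ S and 1_G ∈ π(T). Conversely, if G is abelian with |G| ≥ 3, this fails: there is a sequence of length D(G) with no nontrivial proper product-one sub-multiset. -/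
section Helpers
variable {G : Type*} [Group G]

lemma piSet_nonempty (S : Multiset G) : ∃ g : G, g ∈ piSet S :=
  ⟨S.toList.prod, S.toList, S.coe_toList, rfl⟩

lemma productOneFree_iff {S : Multiset G} :
    ProductOneFree S ↔ ∀ T : Multiset G, T ≤ S → T ≠ 0 → (1 : G) ∉ piSet T := by
  unfold ProductOneFree subPiSet
  constructor
  · intro h T hTS hT0 h1
    exact h ⟨T, hTS, hT0, h1⟩
  · rintro h ⟨T, hTS, hT0, h1⟩
    exact h T hTS hT0 h1

/-- Rotation lemma. -/
lemma inv_mem_piSet_of_one {s : G} {T : Multiset G} (h : (1 : G) ∈ piSet (s ::ₘ T)) :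
    s⁻¹ ∈ piSet T := by
  obtain ⟨l, hl, hp⟩ := h
  have hs : s ∈ l := by
    rw [← Multiset.mem_coe, hl]; exact Multiset.mem_cons_self _ _
  obtain ⟨l₁, l₂, rfl⟩ := List.append_of_mem hs
  have hcoe : (↑(l₁ ++ s :: l₂) : Multiset G) = s ::ₘ (↑(l₂ ++ l₁) : Multiset G) := by
    show (↑l₁ + ↑(s :: l₂) : Multiset G) = _
    rw [← Multiset.cons_coe, Multiset.add_cons]
    show s ::ₘ (↑l₁ + ↑l₂) = _
    rw [Multiset.cons_inj_right, add_comm]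
    rfl
  have hT : (↑(l₂ ++ l₁) : Multiset G) = T := by
    rw [hcoe] at hl
    exact (Multiset.cons_inj_right s).mp hl
  refine ⟨l₂ ++ l₁, hT, ?_⟩
  have hp' : l₁.prod * (s * l₂.prod) = 1 := by
    simpa [List.prod_append] using hp
  have h1 : s * l₂.prod = l₁.prod⁻¹ := eq_inv_of_mul_eq_one_right hp'
  have hs2 : s = l₁.prod⁻¹ * l₂.prod⁻¹ := eq_mul_inv_of_mul_eq h1
  rw [List.prod_append, hs2]
  group

lemma one_mem_piSet_cons {s : G} {T : Multiset G} (h : s⁻¹ ∈ piSet T) :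
    (1 : G) ∈ piSet (s ::ₘ T) := by
  obtain ⟨l, hl, hp⟩ := h
  exact ⟨s :: l, by rw [← Multiset.cons_coe, hl], by simp [hp]⟩

/-- peel a cons off a sum decomposition -/
lemma add_eq_cons_cases [DecidableEq G] {T V W : Multiset G} {a : G} (h : T + V = a ::ₘ W) :
    (∃ T', T = a ::ₘ T' ∧ T' + V = W) ∨ (∃ V', V = a ::ₘ V' ∧ T + V' = W) := by
  have ha : a ∈ T + V := by rw [h]; exact Multiset.mem_cons_self _ _
  rcases Multiset.mem_add.mp ha with hT | hV
  · left
    refine ⟨T.erase a, (Multiset.cons_erase hT).symm, ?_⟩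
    have : a ::ₘ (T.erase a + V) = a ::ₘ W := by
      rw [← Multiset.cons_add, Multiset.cons_erase hT, h]
    exact (Multiset.cons_inj_right a).mp this
  · right
    refine ⟨V.erase a, (Multiset.cons_erase hV).symm, ?_⟩
    have : a ::ₘ (T + V.erase a) = a ::ₘ W := by
      rw [← Multiset.add_cons, Multiset.cons_erase hV, h]
    exact (Multiset.cons_inj_right a).mp this

lemma le_cons_cases [DecidableEq G] {T W : Multiset G} {a : G} (h : T ≤ a ::ₘ W) :
    T ≤ W ∨ ∃ T', T = a ::ₘ T' ∧ T' ≤ W := by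
  by_cases haT : a ∈ T
  · right
    refine ⟨T.erase a, (Multiset.cons_erase haT).symm, ?_⟩
    rw [Multiset.erase_le_iff_le_cons]; exact h
  · left
    rw [Multiset.le_iff_count] at h ⊢
    intro b
    have := h b
    rcases eq_or_ne b a with rfl | hba
    · simp [Multiset.count_eq_zero_of_notMem haT]
    · simpa [Multiset.count_cons, hba] using this

lemma singleton_product_one {a : G} (h : IsProductOne ({a} : Multiset G)) : a = 1 := by
  obtain ⟨l, hl, hp⟩ := h
  rw [Multiset.coe_eq_singleton] at hl
  subst hl
  simpa using hp

end Helpers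

section Bounds
variable {G : Type*} [Group G] [Fintype G]

lemma exists_split (l : List G) (h : Fintype.card G < l.length) :
    ∃ l₁ l₂ l₃ : List G, l = l₁ ++ l₂ ++ l₃ ∧ l₂ ≠ [] ∧ l₃ ≠ [] ∧ l₂.prod = 1 ∧
      l₁.prod * l₃.prod = l.prod := by
  have hcard : Fintype.card G < Fintype.card (Fin l.length) := by simpa using h
  obtain ⟨x, y, hxy, hfeq⟩ :=
    Fintype.exists_ne_map_eq_of_card_lt (fun i : Fin l.length => (l.take i).prod) hcard
  -- wlog x < y
  obtain ⟨i, j, hij, hfeq⟩ : ∃ i j : Fin l.length, i < j ∧ (l.take i).prod = (l.take j).prod := by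
    rcases lt_or_gt_of_ne hxy with hlt | hgt
    · exact ⟨x, y, hlt, hfeq⟩
    · exact ⟨y, x, hgt, hfeq.symm⟩
  refine ⟨l.take i, (l.take j).drop i, l.drop j, ?_, ?_, ?_, ?_, ?_⟩
  · have h1 : (l.take j).take i = l.take i := by
      rw [List.take_take]; congr 1; exact min_eq_left (le_of_lt hij)
    rw [← h1, List.take_append_drop, List.take_append_drop]
  · have hj : (j:ℕ) ≤ l.length := le_of_lt j.isLt
    have : ((l.take j).drop i).length = (j:ℕ) - i := by
      rw [List.length_drop, List.length_take, min_eq_left hj]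
    intro hnil
    rw [hnil] at this
    simp at this
    omega
  · have : (l.drop j).length = l.length - j := by simp
    intro hnil
    rw [hnil] at this
    simp at this
    omega
  · have h1 : (l.take j).take i = l.take i := by
      rw [List.take_take]; congr 1; exact min_eq_left (le_of_lt hij)
    have h2 : l.take i ++ (l.take j).drop i = l.take j := by
      rw [← h1, List.take_append_drop]
    have h3 : (l.take i).prod * ((l.take j).drop i).prod = (l.take j).prod := by
      rw [← List.prod_append, h2]
    rw [← hfeq] at h3
    exact mul_left_cancel (by rw [h3, mul_one])
  · have h4 : (l.take j).prod * (l.drop j).prod = l.prod := by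
      rw [← List.prod_append, List.take_append_drop]
    rw [← hfeq] at h4
    exact h4

lemma card_le_of_free {S : Multiset G} (h : ProductOneFree S) :
    Multiset.card S ≤ Fintype.card G := by
  by_contra hc
  push_neg at hc
  have hlen : Fintype.card G < S.toList.length := by simpa using hc
  obtain ⟨l₁, l₂, l₃, heq, h2, -, hp2, -⟩ := exists_split S.toList hlen
  rw [productOneFree_iff] at h
  refine h (↑l₂) ?_ (by simpa [Multiset.coe_eq_zero] using h2) ⟨l₂, rfl, hp2⟩
  have : S = ↑l₂ + (↑l₁ + ↑l₃ : Multiset G) := by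
    conv_lhs => rw [← S.coe_toList, heq]
    show (↑l₁ + ↑l₂ + ↑l₃ : Multiset G) = _
    abel
  rw [this]
  exact Multiset.le_add_right _ _

lemma card_le_of_atom {A : Multiset G} (h : IsPOAtom A) :
    Multiset.card A ≤ Fintype.card G := by
  by_contra hc
  push_neg at hc
  obtain ⟨hA0, hA1, hAmin⟩ := h
  obtain ⟨l, hl, hp⟩ := hA1
  have hlen : Fintype.card G < l.length := by
    have : l.length = Multiset.card A := by rw [← hl]; rfl
    omega
  obtain ⟨l₁, l₂, l₃, heq, h2, h3, hp2, hp13⟩ := exists_split l hlen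
  have hsum : (↑l₂ : Multiset G) + (↑(l₁ ++ l₃) : Multiset G) = A := by
    rw [← hl, heq]
    show (↑l₂ + (↑l₁ + ↑l₃) : Multiset G) = ↑l₁ + ↑l₂ + ↑l₃
    abel
  have h1 : IsProductOne (↑l₂ : Multiset G) := ⟨l₂, rfl, hp2⟩
  have hprod : (l₁ ++ l₃).prod = 1 := by rw [List.prod_append, hp13, hp]
  have h1' : IsProductOne (↑(l₁ ++ l₃) : Multiset G) := ⟨l₁ ++ l₃, rfl, hprod⟩
  rcases hAmin _ _ h1 h1' hsum with h0 | h0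
  · exact h2 (by simpa [Multiset.coe_eq_zero] using h0)
  · have h03 : l₁ = [] ∧ l₃ = [] := by simpa using h0
    exact h3 h03.2

lemma bddAbove_free : BddAbove {n | ∃ S : Multiset G, ProductOneFree S ∧ Multiset.card S = n} := by
  refine ⟨Fintype.card G, ?_⟩
  rintro n ⟨S, hS, rfl⟩
  exact card_le_of_free hS

lemma bddAbove_atom : BddAbove {n | ∃ S : Multiset G, IsPOAtom S ∧ Multiset.card S = n} := by
  refine ⟨Fintype.card G, ?_⟩
  rintro n ⟨S, hS, rfl⟩
  exact card_le_of_atom hS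

lemma atom_of_free {S : Multiset G} (h : ProductOneFree S) {g : G} (hg : g ∈ piSet S) :
    IsPOAtom (g⁻¹ ::ₘ S) := by
  classical
  obtain ⟨l, hl, hp⟩ := hg
  refine ⟨by simp, ⟨g⁻¹ :: l, by rw [← Multiset.cons_coe, hl], by simp [hp]⟩, ?_⟩
  intro T V hT hV hTV
  by_contra hcon
  push_neg at hcon
  obtain ⟨hT0, hV0⟩ := hcon
  rw [productOneFree_iff] at h
  rcases add_eq_cons_cases hTV with ⟨T', rfl, hW⟩ | ⟨V', rfl, hW⟩
  · exact h V (hW ▸ Multiset.le_add_left _ _) hV0 hV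
  · exact h T (hW ▸ Multiset.le_add_right _ _) hT0 hT

lemma smalld_add_one_le_bigD : smalld G + 1 ≤ bigD G := by
  have hmem := Nat.sSup_mem (s := {n | ∃ S : Multiset G, ProductOneFree S ∧ Multiset.card S = n})
    ⟨0, 0, by rw [productOneFree_iff]; rintro T hT hT0; simp [Multiset.le_zero] at hT; exact absurd hT hT0, rfl⟩
    bddAbove_free
  obtain ⟨S₀, hfree, hcard⟩ := hmem
  obtain ⟨g₀, hg₀⟩ := piSet_nonempty S₀
  refine le_csSup bddAbove_atom ⟨g₀⁻¹ ::ₘ S₀, atom_of_free hfree hg₀, ?_⟩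
  simp [hcard, smalld]

end Bounds

section Main
variable {G : Type*} [Group G] [Fintype G]

lemma part1 (hna : ¬ ∀ a b : G, a * b = b * a) (S : Multiset G)
    (hcard : Multiset.card S = bigD G) :
    ∃ T : Multiset G, T ≤ S ∧ T ≠ 0 ∧ T ≠ S ∧ IsProductOne T := by
  classical
  by_contra hcon
  push_neg at hcon
  have hDd : smalld G + 1 ≤ bigD G := smalld_add_one_le_bigD
  -- S is product-one
  have hSnotfree : ¬ ProductOneFree S := by
    intro hfree
    have h1 : Multiset.card S ≤ smalld G := le_csSup bddAbove_free ⟨S, hfree, rfl⟩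
    omega
  have hS1 : IsProductOne S := by
    rw [productOneFree_iff] at hSnotfree
    push_neg at hSnotfree
    obtain ⟨T, hTle, hT0, hT1⟩ := hSnotfree
    by_cases hTS : T = S
    · rw [← hTS]; exact hT1
    · exact absurd hT1 (hcon T hTle hT0 hTS)
  have hS0 : S ≠ 0 := by
    intro h
    rw [h] at hcard
    simp at hcard
    omega
  obtain ⟨s, hs⟩ := Multiset.exists_mem_of_ne_zero hS0
  set S' := S.erase s with hS'def
  have hS'cons : s ::ₘ S' = S := Multiset.cons_erase hs
  have hcS : Multiset.card S = Multiset.card S' + 1 := by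
    rw [← hS'cons]; simp
  have hS'free : ∀ T : Multiset G, T ≤ S' → T ≠ 0 → (1 : G) ∉ piSet T := by
    intro T hTle hT0 hT1
    have hTleS : T ≤ S := le_trans hTle (Multiset.erase_le s S)
    have hTcard : Multiset.card T ≤ Multiset.card S' := Multiset.card_le_card hTle
    have hTS : T ≠ S := by
      intro h
      rw [h] at hTcard
      omega
    exact hcon T hTleS hT0 hTS hT1
  -- every nonidentity element is a subsequence product over S'
  have hPi : ∀ g : G, g ≠ 1 → ∃ W₁ : Multiset G, W₁ ≤ S' ∧ g ∈ piSet W₁ := by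
    intro g hg
    have hMnotfree : ¬ ProductOneFree (g⁻¹ ::ₘ S') := by
      intro hfree
      have h1 : Multiset.card (g⁻¹ ::ₘ S') ≤ smalld G :=
        le_csSup bddAbove_free ⟨_, hfree, rfl⟩
      simp only [Multiset.card_cons] at h1
      omega
    rw [productOneFree_iff] at hMnotfree
    push_neg at hMnotfree
    obtain ⟨W, hWle, hW0, hW1⟩ := hMnotfree
    rcases le_cons_cases hWle with hWle' | ⟨W₁, rfl, hW₁le⟩
    · exact absurd hW1 (hS'free W hWle' hW0)
    · refine ⟨W₁, hW₁le, ?_⟩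
      have := inv_mem_piSet_of_one hW1
      rwa [inv_inv] at this
  -- a noncommuting pair in the support of S'
  have hncp : ∃ u v : G, u ∈ S' ∧ v ∈ S' ∧ u * v ≠ v * u := by
    by_contra hall
    push_neg at hall
    apply hna
    have hHG : ∀ g : G, g ∈ Subgroup.closure {x : G | x ∈ S'} := by
      intro g
      by_cases hg : g = 1
      · rw [hg]; exact one_mem _
      · obtain ⟨W₁, hWle, l, hl, hpl⟩ := hPi g hg
        rw [← hpl]
        refine Subgroup.list_prod_mem _ ?_
        intro x hx
        apply Subgroup.subset_closure
        have hxW : x ∈ W₁ := by rw [← hl]; exact Multiset.mem_coe.mpr hx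
        exact Multiset.mem_of_le hWle hxW
    set H := Subgroup.closure {x : G | x ∈ S'} with hH
    have hle : H ≤ Subgroup.centralizer {x : G | x ∈ S'} := by
      rw [hH, Subgroup.closure_le]
      intro x hx
      exact Subgroup.mem_centralizer_iff.mpr (fun y hy => hall y x hy hx)
    have hle2 : H ≤ Subgroup.centralizer (H : Set G) := by
      rw [hH, Subgroup.closure_le]
      intro x hx
      refine Subgroup.mem_centralizer_iff.mpr ?_
      intro y hy
      have := Subgroup.mem_centralizer_iff.mp (hle hy) x hx
      exact this.symm
    intro a b
    exact Subgroup.mem_centralizer_iff.mp (hle2 (hHG b)) a (hHG a)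
  obtain ⟨u, v, hu, hv, huv⟩ := hncp
  have huvne : v ≠ u := by intro h; exact huv (by rw [h])
  have hvS'u : v ∈ S'.erase u := (Multiset.mem_erase_of_ne huvne).mpr hv
  set R := (S'.erase u).erase v with hRdef
  have hR1 : v ::ₘ R = S'.erase u := Multiset.cons_erase hvS'u
  have hR2 : u ::ₘ v ::ₘ R = S' := by rw [hR1]; exact Multiset.cons_erase hu
  set c := R.toList.prod with hc
  have hw1 : u * (v * c) ∈ piSet S' := by
    refine ⟨u :: v :: R.toList, ?_, by simp [hc]⟩
    rw [← Multiset.cons_coe, ← Multiset.cons_coe, R.coe_toList, hR2]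
  have hw2 : v * (u * c) ∈ piSet S' := by
    refine ⟨v :: u :: R.toList, ?_, by simp [hc]⟩
    rw [← Multiset.cons_coe, ← Multiset.cons_coe, R.coe_toList, Multiset.cons_swap, hR2]
  have hw12 : u * (v * c) ≠ v * (u * c) := by
    intro h
    apply huv
    rw [← mul_assoc, ← mul_assoc] at h
    exact mul_right_cancel h
  have hsinv : s⁻¹ ∈ piSet S' := by
    apply inv_mem_piSet_of_one
    rw [hS'cons]
    exact hS1
  obtain ⟨w, hwS', hwne⟩ : ∃ w : G, w ∈ piSet S' ∧ w ≠ s⁻¹ := by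
    by_cases h : u * (v * c) = s⁻¹
    · exact ⟨v * (u * c), hw2, fun heq => hw12 (h.trans heq.symm)⟩
    · exact ⟨u * (v * c), hw1, h⟩
  set y := w⁻¹ * s⁻¹ with hy
  have hy1 : y ≠ 1 := by
    intro h
    apply hwne
    rw [hy] at h
    have : s⁻¹ = (w⁻¹)⁻¹ := eq_inv_of_mul_eq_one_right h
    rw [inv_inv] at this
    exact this.symm
  set U := s ::ₘ y ::ₘ S' with hU
  have hU1 : IsProductOne U := by
    obtain ⟨lw, hlw, hplw⟩ := hwS'
    refine ⟨s :: (lw ++ [y]), ?_, ?_⟩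
    · rw [← Multiset.cons_coe]
      rw [hU, Multiset.cons_inj_right]
      show (↑lw + ↑[y] : Multiset G) = y ::ₘ S'
      rw [hlw, add_comm]
      rfl
    · simp [List.prod_append, hplw, hy]
  have hUatom : IsPOAtom U := by
    refine ⟨by simp [hU], hU1, ?_⟩
    intro T V hT hV hTV
    by_contra hc0
    push_neg at hc0
    obtain ⟨hT0, hV0⟩ := hc0
    -- helper for type (ii): product-one s ::ₘ X with X a proper submultiset of S'
    have hrig2 : ∀ X : Multiset G, X ≤ S' → Multiset.card X < Multiset.card S' →
        ¬ IsProductOne (s ::ₘ X) := by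
      intro X hXle hXcard hX1
      refine hcon (s ::ₘ X) ?_ (by simp) ?_ hX1
      · rw [← hS'cons]; exact Multiset.cons_le_cons s hXle
      · intro h
        have := congrArg Multiset.card h
        simp only [Multiset.card_cons] at this
        omega
    rw [hU] at hTV
    rcases add_eq_cons_cases hTV with ⟨T₁, rfl, h1⟩ | ⟨V₁, rfl, h1⟩
    · rcases add_eq_cons_cases h1 with ⟨T₂, rfl, h2⟩ | ⟨V₂, rfl, h2⟩
      · -- V ≤ S'
        have hVle : V ≤ S' := h2 ▸ Multiset.le_add_left _ _
        exact hS'free V hVle hV0 hV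
      · by_cases hV₂ : V₂ = 0
        · rw [hV₂] at hV
          exact hy1 (singleton_product_one hV)
        · have hT₁le : T₁ ≤ S' := h2 ▸ Multiset.le_add_right _ _
          have hcardlt : Multiset.card T₁ < Multiset.card S' := by
            have := congrArg Multiset.card h2
            simp only [Multiset.card_add] at this
            have hV₂pos : 0 < Multiset.card V₂ := Multiset.card_pos.mpr hV₂
            omega
          exact hrig2 T₁ hT₁le hcardlt hT
    · rcases add_eq_cons_cases h1 with ⟨T₂, rfl, h2⟩ | ⟨V₂, rfl, h2⟩
      · by_cases hT₂ : T₂ = 0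
        · rw [hT₂] at hT
          exact hy1 (singleton_product_one hT)
        · have hV₁le : V₁ ≤ S' := h2 ▸ Multiset.le_add_left _ _
          have hcardlt : Multiset.card V₁ < Multiset.card S' := by
            have := congrArg Multiset.card h2
            simp only [Multiset.card_add] at this
            have hT₂pos : 0 < Multiset.card T₂ := Multiset.card_pos.mpr hT₂
            omega
          exact hrig2 V₁ hV₁le hcardlt hV
      · have hTle : T ≤ S' := h2 ▸ Multiset.le_add_right _ _
        exact hS'free T hTle hT0 hT
  have hUcard : Multiset.card U = Multiset.card S' + 2 := by
    rw [hU]; simp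
  have hle : Multiset.card U ≤ bigD G := le_csSup bddAbove_atom ⟨U, hUatom, rfl⟩
  omega

lemma part2 (hcomm : ∀ a b : G, a * b = b * a) :
    ∃ S : Multiset G, Multiset.card S = bigD G ∧
      ∀ T : Multiset G, T ≤ S → T ≠ 0 → T ≠ S → ¬ IsProductOne T := by
  classical
  letI : CommGroup G := { ‹Group G› with mul_comm := hcomm }
  have hprodeq : ∀ (T : Multiset G) (g : G), g ∈ piSet T → g = T.prod := by
    rintro T g ⟨l, rfl, rfl⟩
    rfl
  have hmemprod : ∀ T : Multiset G, T.prod ∈ piSet T :=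
    fun T => ⟨T.toList, T.coe_toList, Multiset.prod_toList T⟩
  have hfree0 : ProductOneFree (0 : Multiset G) := by
    rw [productOneFree_iff]
    intro T hT hT0
    rw [Multiset.le_zero] at hT
    exact absurd hT hT0
  obtain ⟨S₀, hfree, hcard₀⟩ := Nat.sSup_mem
    (s := {n | ∃ S : Multiset G, ProductOneFree S ∧ Multiset.card S = n})
    ⟨0, 0, hfree0, rfl⟩ bddAbove_free
  set g₀ := S₀.prod with hg₀
  have hatom : IsPOAtom (g₀⁻¹ ::ₘ S₀) := atom_of_free hfree (hmemprod S₀)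
  have hatom1 : IsPOAtom ({(1 : G)} : Multiset G) := by
    refine ⟨by simp, ⟨[1], rfl, by simp⟩, ?_⟩
    intro T V _ _ hTV
    have := congrArg Multiset.card hTV
    simp only [Multiset.card_add, Multiset.card_singleton] at this
    rcases Nat.eq_zero_or_pos (Multiset.card T) with h | h
    · exact Or.inl (Multiset.card_eq_zero.mp h)
    · exact Or.inr (Multiset.card_eq_zero.mp (by omega))
  have hDle : bigD G ≤ smalld G + 1 := by
    refine csSup_le ⟨1, {(1 : G)}, hatom1, rfl⟩ ?_
    rintro n ⟨A, hA, rfl⟩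
    obtain ⟨hA0, hA1, hAmin⟩ := hA
    obtain ⟨a, ha⟩ := Multiset.exists_mem_of_ne_zero hA0
    have hfreeA : ProductOneFree (A.erase a) := by
      rw [productOneFree_iff]
      intro T hTle hT0 hT1
      obtain ⟨V, hV⟩ := Multiset.le_iff_exists_add.mp
        (le_trans hTle (Multiset.erase_le a A))
      have hV0 : V ≠ 0 := by
        intro h
        have hTA : T = A := by rw [hV, h, add_zero]
        have h1 : Multiset.card T ≤ Multiset.card (A.erase a) := Multiset.card_le_card hTle
        have h2 : Multiset.card (A.erase a) = Multiset.card A - 1 :=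
          Multiset.card_erase_of_mem ha
        have h3 : 0 < Multiset.card A := Multiset.card_pos.mpr hA0
        rw [hTA] at h1
        omega
      have hVP : IsProductOne V := by
        have h1 : A.prod = 1 := (hprodeq A 1 hA1).symm
        have h2 : T.prod * V.prod = 1 := by rw [← Multiset.prod_add, ← hV, h1]
        have hT1' : T.prod = 1 := (hprodeq T 1 hT1).symm
        have h3 : V.prod = 1 := by rw [hT1', one_mul] at h2; exact h2
        show (1 : G) ∈ piSet V
        rw [← h3]
        exact hmemprod V
      rcases hAmin T V hT1 hVP hV.symm with h | h
      · exact hT0 h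
      · exact hV0 h
    have h1 : Multiset.card (A.erase a) ≤ smalld G :=
      le_csSup bddAbove_free ⟨_, hfreeA, rfl⟩
    have h2 : Multiset.card (A.erase a) = Multiset.card A - 1 :=
      Multiset.card_erase_of_mem ha
    have h3 : 0 < Multiset.card A := Multiset.card_pos.mpr hA0
    omega
  have hDge : smalld G + 1 ≤ bigD G := smalld_add_one_le_bigD
  have hD : bigD G = smalld G + 1 := le_antisymm hDle hDge
  refine ⟨g₀⁻¹ ::ₘ S₀, by simp [hD, hcard₀, smalld], ?_⟩
  intro T hTle hT0 hTS hT1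
  rcases le_cons_cases hTle with hTle' | ⟨T', rfl, hT'le⟩
  · exact (productOneFree_iff.mp hfree) T hTle' hT0 hT1
  · obtain ⟨V, hV⟩ := Multiset.le_iff_exists_add.mp hT'le
    have hV0 : V ≠ 0 := by
      intro h
      exact hTS (by rw [hV, h, add_zero])
    have hTprod : (g₀⁻¹ ::ₘ T').prod = 1 := (hprodeq _ 1 hT1).symm
    have h2 : g₀⁻¹ * T'.prod = 1 := by simpa [Multiset.prod_cons] using hTprod
    have hT'p : g₀ = T'.prod := inv_mul_eq_one.mp h2
    have hVp : V.prod = 1 := by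
      have h4 : S₀.prod = T'.prod * V.prod := by rw [hV, Multiset.prod_add]
      rw [← hg₀, hT'p] at h4
      exact (mul_left_cancel (a := T'.prod) (by rw [← h4, mul_one])).symm
    refine (productOneFree_iff.mp hfree) V (hV ▸ Multiset.le_add_left _ _) hV0 ?_
    show (1 : G) ∈ piSet V
    rw [← hVp]
    exact hmemprod V

end Main


theorem stmt5 {G : Type*} [Group G] [Fintype G] (h3 : 3 ≤ Fintype.card G) :
    ((¬ ∀ a b : G, a * b = b * a) →
      ∀ S : Multiset G, Multiset.card S = bigD G →
        ∃ T : Multiset G, T ≤ S ∧ T ≠ 0 ∧ T ≠ S ∧ IsProductOne T) ∧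
    ((∀ a b : G, a * b = b * a) →
      ∃ S : Multiset G, Multiset.card S = bigD G ∧
        ∀ T : Multiset G, T ≤ S → T ≠ 0 → T ≠ S → ¬ IsProductOne T) := by
  exact ⟨fun hna S h => part1 hna S h, fun hc => part2 hc⟩
end

section
/- Let G be a finite group. Then D(G) ≤ |G| ≤ 1 + Σ_{k=1}^{d(G)} C(d(G), k) · k!, where C(n,k) is the binomial coefficient. Consequently, for every N ∈ ℕ there are only finitely many finite groups G (up to isomorphism) with D(G) = N. -/
lemma mem_subPiSet_iff {G : Type*} [Group G] {S : Multiset G} {g : G} :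
    g ∈ subPiSet S ↔ ∃ l : List G, l ≠ [] ∧ (l : Multiset G) ≤ S ∧ l.prod = g := by
  constructor
  · rintro ⟨T, hTS, hT0, l, hl, hprod⟩
    exact ⟨l, by simpa [← Multiset.coe_eq_zero, hl] using hT0, hl ▸ hTS, hprod⟩
  · rintro ⟨l, hl0, hlS, hprod⟩
    exact ⟨l, hlS, by simpa [Multiset.coe_eq_zero] using hl0, l, rfl, hprod⟩

lemma atom_card_le {G : Type} [Group G] [Fintype G] {S : Multiset G} (hS : IsPOAtom S) :
    Multiset.card S ≤ Fintype.card G := by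
  by_contra hcon
  push_neg at hcon
  obtain ⟨hS0, ⟨l, hl, hprod⟩, hmin⟩ := hS
  have hlen : l.length = Multiset.card S := by rw [← hl]; simp
  set f : Fin l.length → G := fun i => (l.take (i + 1)).prod with hf
  have hcard : Fintype.card G < Fintype.card (Fin l.length) := by
    simpa [hlen] using hcon
  obtain ⟨x, y, hxy, hfxy⟩ := Fintype.exists_ne_map_eq_of_card_lt f hcard
  have key : ∀ i j : Fin l.length, i < j → f i = f j → False := by
    intro i j hij hfij
    have hi := i.isLt
    have hj := j.isLt
    set a := l.take (i + 1) with ha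
    set b := (l.take (j + 1)).drop (i + 1) with hb
    set c := l.drop (j + 1) with hc
    have hab : a ++ b = l.take (j + 1) := by
      rw [ha, hb]
      have : l.take (i+1) = (l.take (j+1)).take (i+1) := by
        rw [List.take_take, min_eq_left (by omega)]
      rw [this, List.take_append_drop]
    have habc : (a ++ b) ++ c = l := by rw [hab, hc, List.take_append_drop]
    have hpa : a.prod = f i := rfl
    have hpab : (a ++ b).prod = f j := by rw [hab]
    have hpb : b.prod = 1 := by
      have h1 : a.prod * b.prod = f j := by rw [← List.prod_append, hpab]
      rw [hpa, hfij] at h1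
      exact mul_left_cancel (a := f j) (h1.trans (mul_one (f j)).symm)
    have hpc : c.prod = (f i)⁻¹ := by
      have h2 : f i * c.prod = 1 := by
        rw [← hpa]
        calc a.prod * c.prod = a.prod * b.prod * c.prod := by rw [hpb, mul_one]
          _ = ((a ++ b) ++ c).prod := by rw [List.prod_append, List.prod_append]
          _ = 1 := by rw [habc, hprod]
      exact (inv_eq_of_mul_eq_one_right h2).symm
    have hac : (a ++ c).prod = 1 := by
      rw [List.prod_append, hpa, hpc, mul_inv_cancel]
    have hij' : (i : ℕ) < (j : ℕ) := hij
    have hbne : b ≠ [] := by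
      intro h
      have h0 : b.length = 0 := by rw [h]; rfl
      rw [hb, List.length_drop, List.length_take] at h0
      omega
    have hane : a ≠ [] := by
      intro h
      have h0 : a.length = 0 := by rw [h]; rfl
      rw [ha, List.length_take] at h0
      omega
    have hsum : (b : Multiset G) + (↑(a ++ c) : Multiset G) = S := by
      rw [← hl, ← habc]
      rw [← Multiset.coe_add, ← Multiset.coe_add, ← Multiset.coe_add]
      abel
    rcases hmin ↑b ↑(a ++ c) ⟨b, rfl, hpb⟩ ⟨a ++ c, rfl, hac⟩ hsum with h | h
    · exact hbne ((Multiset.coe_eq_zero b).mp h)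
    · rw [Multiset.coe_eq_zero, List.append_eq_nil_iff] at h
      exact hane h.1
  rcases hxy.lt_or_gt with h | h
  · exact key x y h hfxy
  · exact key y x h hfxy.symm

lemma free_card_lt {G : Type} [Group G] [Fintype G] {S : Multiset G}
    (hfree : ProductOneFree S) : Multiset.card S + 1 ≤ Fintype.card G := by
  set l := S.toList with hlt
  have hl : (l : Multiset G) = S := Multiset.coe_toList S
  have hlen : l.length = Multiset.card S := by rw [← hl]; simp
  set f : Fin (l.length + 1) → G := fun i => (l.take i).prod with hf
  have hinj : Function.Injective f := by
    have key : ∀ i j : Fin (l.length + 1), i < j → f i ≠ f j := by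
      intro i j hij hfij
      have hi := i.isLt
      have hj := j.isLt
      have hij' : (i : ℕ) < (j : ℕ) := hij
      set b := (l.take j).drop i with hb
      have hbsub : b.Sublist l :=
        ((List.drop_sublist _ _).trans (List.take_sublist _ _))
      have hab : l.take (i : ℕ) ++ b = l.take (j : ℕ) := by
        rw [hb]
        have : l.take (i : ℕ) = (l.take (j : ℕ)).take (i : ℕ) := by
          rw [List.take_take, min_eq_left (by omega)]
        rw [this, List.take_append_drop]
      have hpb : b.prod = 1 := by
        have h1 : (l.take (i : ℕ)).prod * b.prod = f j := by
          rw [← List.prod_append, hab]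
        rw [show (l.take (i : ℕ)).prod = f i from rfl, hfij] at h1
        exact mul_left_cancel (a := f j) (h1.trans (mul_one (f j)).symm)
      have hbne : b ≠ [] := by
        intro h
        have h0 : b.length = 0 := by rw [h]; rfl
        rw [hb, List.length_drop, List.length_take] at h0
        omega
      exact hfree (mem_subPiSet_iff.mpr ⟨b, hbne, hl ▸ Multiset.coe_le.mpr hbsub.subperm, hpb⟩)
    intro i j hfij
    by_contra hne
    rcases (Ne.lt_or_gt hne) with h | h
    · exact key i j h hfij
    · exact key j i h hfij.symm
  have := Fintype.card_le_of_injective f hinj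
  simpa [hlen] using this

lemma smalld_bdd (G : Type) [Group G] [Fintype G] :
    BddAbove {n | ∃ S : Multiset G, ProductOneFree S ∧ Multiset.card S = n} := by
  refine ⟨Fintype.card G, ?_⟩
  rintro n ⟨S, hS, rfl⟩
  have := free_card_lt hS
  omega

lemma bigD_bdd (G : Type) [Group G] [Fintype G] :
    BddAbove {n | ∃ S : Multiset G, IsPOAtom S ∧ Multiset.card S = n} := by
  refine ⟨Fintype.card G, ?_⟩
  rintro n ⟨S, hS, rfl⟩
  exact atom_card_le hS

lemma zero_free {G : Type} [Group G] : ProductOneFree (0 : Multiset G) := by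
  intro h
  obtain ⟨l, hl0, hle, _⟩ := mem_subPiSet_iff.mp h
  exact hl0 ((Multiset.coe_eq_zero l).mp (Multiset.le_zero.mp hle))

lemma smalld_spec (G : Type) [Group G] [Fintype G] :
    ∃ S : Multiset G, ProductOneFree S ∧ Multiset.card S = smalld G := by
  have : smalld G ∈ {n | ∃ S : Multiset G, ProductOneFree S ∧ Multiset.card S = n} := by
    apply Nat.sSup_mem _ (smalld_bdd G)
    exact ⟨0, Set.mem_setOf_eq ▸ ⟨0, zero_free, Multiset.card_zero⟩⟩
  exact this

lemma smalld_max {G : Type} [Group G] [Fintype G] {S : Multiset G}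
    (hfree : ProductOneFree S) (hcard : Multiset.card S = smalld G)
    {g : G} (hg : g ≠ 1) :
    ∃ l : List G, l ≠ [] ∧ (l : Multiset G) ≤ S ∧ l.prod = g⁻¹ := by
  classical
  have hnotfree : ¬ ProductOneFree (g ::ₘ S) := by
    intro h
    have hle : Multiset.card (g ::ₘ S) ≤ smalld G :=
      le_csSup (smalld_bdd G) ⟨g ::ₘ S, h, rfl⟩
    simp [hcard] at hle
  obtain ⟨m, hm0, hmle, hmprod⟩ := mem_subPiSet_iff.mp (not_not.mp hnotfree)
  have herase : ((m : Multiset G).erase g : Multiset G) ≤ S := by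
    have := Multiset.erase_le_erase g hmle
    rwa [Multiset.erase_cons_head] at this
  by_cases hgm : g ∈ m
  · obtain ⟨u, v, rfl⟩ := List.append_of_mem hgm
    refine ⟨v ++ u, ?_, ?_, ?_⟩
    · intro h
      rw [List.append_eq_nil_iff] at h
      obtain ⟨rfl, rfl⟩ := h
      simp at hmprod
      exact hg hmprod
    · have hsplit : (↑(u ++ g :: v) : Multiset G) = g ::ₘ (↑(v ++ u) : Multiset G) := by
        rw [← Multiset.coe_add, ← Multiset.coe_add, ← Multiset.cons_coe, add_comm,
          Multiset.cons_add]
      rw [hsplit, Multiset.erase_cons_head] at herase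
      exact herase
    · have h1 : u.prod * (g * v.prod) = 1 := by
        rw [← List.prod_cons, ← List.prod_append]; exact hmprod
      have h2 : g * v.prod = u.prod⁻¹ := (inv_eq_of_mul_eq_one_right h1).symm
      have h3 : g = u.prod⁻¹ * v.prod⁻¹ := by
        have := congrArg (· * v.prod⁻¹) h2
        simpa [mul_assoc] using this
      rw [List.prod_append, h3]
      simp [mul_inv_rev]
  · exfalso
    apply hfree
    refine mem_subPiSet_iff.mpr ⟨m, hm0, ?_, hmprod⟩
    have : ((m : Multiset G).erase g) = (m : Multiset G) :=
      Multiset.erase_of_notMem (by simpa using hgm)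
    rwa [this] at herase

lemma split_aux {G : Type} [Group G] {S T U : Multiset G} {p : G}
    (hfree : ProductOneFree S) (hU : IsProductOne U) (hU0 : U ≠ 0)
    (hmemT : p ∈ T) (hTU : T + U = p ::ₘ S) : False := by
  classical
  have h1 : T.erase p + U = S := by
    have h2 := congrArg (fun M => Multiset.erase M p) hTU
    rwa [Multiset.erase_add_left_pos U hmemT, Multiset.erase_cons_head] at h2
  exact hfree ⟨U, h1 ▸ Multiset.le_add_left U (T.erase p), hU0, hU⟩

lemma smalld_lt_bigD (G : Type) [Group G] [Fintype G] : smalld G + 1 ≤ bigD G := by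
  obtain ⟨S, hfree, hcard⟩ := smalld_spec G
  set p := S.toList.prod with hp
  have hatom : IsPOAtom (p⁻¹ ::ₘ S) := by
    refine ⟨Multiset.cons_ne_zero, ?_, ?_⟩
    · refine ⟨p⁻¹ :: S.toList, ?_, ?_⟩
      · rw [← Multiset.cons_coe, Multiset.coe_toList]
      · rw [List.prod_cons, ← hp, inv_mul_cancel]
    · intro T U hT hU hTU
      by_contra hcon
      push_neg at hcon
      obtain ⟨hT0, hU0⟩ := hcon
      have hmem : p⁻¹ ∈ T + U := by rw [hTU]; exact Multiset.mem_cons_self _ _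
      rcases Multiset.mem_add.mp hmem with h | h
      · exact split_aux hfree hU hU0 h hTU
      · exact split_aux hfree hT hT0 h (by rwa [add_comm] at hTU)
  have : smalld G + 1 ∈ {n | ∃ S : Multiset G, IsPOAtom S ∧ Multiset.card S = n} :=
    ⟨p⁻¹ ::ₘ S, hatom, by rw [Multiset.card_cons, hcard]⟩
  exact le_csSup (bigD_bdd G) this

lemma main_card_bound {G : Type} [Group G] [Fintype G] (S : Multiset G)
    (hmax : ∀ g : G, g ≠ 1 → ∃ l : List G, l ≠ [] ∧ (l : Multiset G) ≤ S ∧ l.prod = g⁻¹) :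
    Fintype.card G ≤ 1 + ∑ k ∈ Finset.Icc 1 (Multiset.card S),
      Nat.choose (Multiset.card S) k * Nat.factorial k := by
  classical
  set d := Multiset.card S with hd
  set L := S.toList with hLdef
  have hLS : (L : Multiset G) = S := Multiset.coe_toList S
  have hLlen : L.length = d := by rw [hd, ← hLS, Multiset.coe_card]
  set F : Finset G := (Finset.Icc 1 d).biUnion
      (fun k => (((List.sublistsLen k L).flatMap List.permutations).map List.prod).toFinset)
      with hF
  have hsub : (Finset.univ : Finset G) ⊆ insert (1 : G) (F.image (fun x => x⁻¹)) := by
    intro g _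
    by_cases hg : g = 1
    · simp [hg]
    · obtain ⟨l, hl0, hlS, hlp⟩ := hmax g hg
      refine Finset.mem_insert_of_mem (Finset.mem_image.2 ⟨g⁻¹, ?_, inv_inv g⟩)
      have hlL : l.Subperm L := Multiset.coe_le.mp (hLS ▸ hlS)
      obtain ⟨l', hperm, hsubl⟩ := hlL
      refine Finset.mem_biUnion.2 ⟨l.length, ?_, ?_⟩
      · rw [Finset.mem_Icc]
        constructor
        · exact List.length_pos_iff.2 hl0
        · rw [← hLlen]; exact hperm.length_eq ▸ hsubl.length_le
      · rw [List.mem_toFinset]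
        refine List.mem_map.2 ⟨l, ?_, hlp⟩
        refine List.mem_flatMap.2 ⟨l', ?_, ?_⟩
        · exact List.mem_sublistsLen.2 ⟨hsubl, hperm.length_eq⟩
        · exact List.mem_permutations.2 hperm.symm
  have hFcard : F.card ≤ ∑ k ∈ Finset.Icc 1 d, Nat.choose d k * Nat.factorial k := by
    refine (Finset.card_biUnion_le).trans (Finset.sum_le_sum ?_)
    intro k hk
    calc (((List.sublistsLen k L).flatMap List.permutations).map List.prod).toFinset.card
        ≤ (((List.sublistsLen k L).flatMap List.permutations).map List.prod).length :=
          List.toFinset_card_le _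
      _ = ((List.sublistsLen k L).flatMap List.permutations).length := List.length_map _
      _ = ((List.sublistsLen k L).map (List.length ∘ List.permutations)).sum :=
          List.length_flatMap
      _ = Nat.choose d k * Nat.factorial k := by
          have hconst : ∀ x ∈ (List.sublistsLen k L).map (List.length ∘ List.permutations),
              x = Nat.factorial k := by
            intro x hx
            obtain ⟨l', hl', rfl⟩ := List.mem_map.1 hx
            obtain ⟨_, hlen'⟩ := List.mem_sublistsLen.1 hl'
            simp [Function.comp, List.length_permutations, hlen']
          rw [List.sum_eq_card_nsmul _ _ hconst]
          simp [List.length_sublistsLen, hLlen, smul_eq_mul]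
  calc Fintype.card G = (Finset.univ : Finset G).card := rfl
    _ ≤ (insert (1 : G) (F.image (fun x => x⁻¹))).card := Finset.card_le_card hsub
    _ ≤ (F.image (fun x => x⁻¹)).card + 1 := Finset.card_insert_le _ _
    _ ≤ F.card + 1 := by
        have := Finset.card_image_le (s := F) (f := fun x : G => x⁻¹)
        omega
    _ ≤ 1 + ∑ k ∈ Finset.Icc 1 d, Nat.choose d k * Nat.factorial k := by
        have := hFcard; omega

lemma sum_mono_bound {d N : ℕ} (h : d ≤ N) :
    ∑ k ∈ Finset.Icc 1 d, Nat.choose d k * Nat.factorial k ≤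
      ∑ k ∈ Finset.Icc 1 N, Nat.choose N k * Nat.factorial k := by
  calc ∑ k ∈ Finset.Icc 1 d, Nat.choose d k * Nat.factorial k
      ≤ ∑ k ∈ Finset.Icc 1 d, Nat.choose N k * Nat.factorial k := by
        refine Finset.sum_le_sum fun k _ => ?_
        exact Nat.mul_le_mul_right _ (Nat.choose_le_choose k h)
    _ ≤ ∑ k ∈ Finset.Icc 1 N, Nat.choose N k * Nat.factorial k := by
        refine Finset.sum_le_sum_of_subset ?_
        exact Finset.Icc_subset_Icc_right h

theorem stmt8 :
    (∀ (G : Type) [Group G] [Fintype G],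
      bigD G ≤ Fintype.card G ∧
      Fintype.card G ≤
        1 + ∑ k ∈ Finset.Icc 1 (smalld G), Nat.choose (smalld G) k * Nat.factorial k) ∧
    (∀ N : ℕ, ∃ M : ℕ, ∀ (G : Type) [Group G] [Fintype G],
      bigD G = N → Fintype.card G ≤ M) := by
  have part1 : ∀ (G : Type) [Group G] [Fintype G],
      bigD G ≤ Fintype.card G ∧
      Fintype.card G ≤
        1 + ∑ k ∈ Finset.Icc 1 (smalld G), Nat.choose (smalld G) k * Nat.factorial k := by
    intro G _ _
    constructor
    · apply csSup_le'
      rintro n ⟨S, hS, rfl⟩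
      exact atom_card_le hS
    · obtain ⟨S, hfree, hcard⟩ := smalld_spec G
      have := main_card_bound S (fun g hg => smalld_max hfree hcard hg)
      rwa [hcard] at this
  refine ⟨part1, ?_⟩
  intro N
  refine ⟨1 + ∑ k ∈ Finset.Icc 1 N, Nat.choose N k * Nat.factorial k, ?_⟩
  intro G _ _ hDG
  have h1 := (part1 G).2
  have h2 : smalld G + 1 ≤ N := hDG ▸ smalld_lt_bigD G
  have h4 := sum_mono_bound (show smalld G ≤ N by omega)
  omega
end

section
/- Let n ≥ 3 be odd and let G = D_{2n} be the dihedral group of order 2n with presentation ⟨a, b : aⁿ = b² = 1, bab = a⁻¹⟩. Consider the subset G₀ = {b, ab}. Then the atoms of the monoid of product-one sequences over G₀ are exactly b^{[2]}, (ab)^{[2]}, and b^{[n]}·(ab)^{[n]}. -/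
/-! Write `b = sr 0` and `ab = sr (-1)`. Since `sr i * sr j = r (j - i)`, a word in `b` and `ab` is
the identity iff it has even length and `n` divides the alternating count `h` of `ab` along it; then
`-h` is the alternating count of `b`. An alternating count is congruent modulo 2 to, and bounded in
absolute value by, the number of occurrences of the letter, so an odd number of `ab`'s forces
`h ≠ 0`, hence at least `n` letters of each kind. Conversely `(b * ab)^n = 1` and
`b^2 = (ab)^2 = 1`.
So `b^[p] (ab)^[q]` is product-one iff `p, q` are both even, or both odd and at least `n`, and the
atoms are the minimal nonzero such pairs `(2, 0)`, `(0, 2)` and `(n, n)`. -/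

open DihedralGroup Multiset

theorem Multiset.eq_replicate_count_add_replicate_count {α : Type*} [DecidableEq α] {b c : α}
    (hbc : b ≠ c) {S : Multiset α} (hS : ∀ x ∈ S, x = b ∨ x = c) :
    S = replicate (S.count b) b + replicate (S.count c) c := by
  ext x
  rw [count_add, count_replicate, count_replicate]
  rcases eq_or_ne x b with rfl | hxb
  · simp [hbc.symm]
  rcases eq_or_ne x c with rfl | hxc
  · simp [hxb.symm]
  · simp [hxb.symm, hxc.symm, count_eq_zero.2 fun hx => (hS x hx).elim hxb hxc]

section ProductOne

variable {G : Type*} [Group G]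

theorem IsProductOne.add {T U : Multiset G} (hT : IsProductOne T) (hU : IsProductOne U) :
    IsProductOne (T + U) := by
  obtain ⟨l₁, rfl, h₁⟩ := hT
  obtain ⟨l₂, rfl, h₂⟩ := hU
  exact ⟨l₁ ++ l₂, rfl, by rw [List.prod_append, h₁, h₂, one_mul]⟩

theorem isProductOne_replicate_iff {x : G} {m : ℕ} :
    IsProductOne (replicate m x) ↔ x ^ m = 1 := by
  constructor
  · rintro ⟨l, hl, hprod⟩
    rw [← coe_replicate, coe_eq_coe, List.perm_replicate] at hl
    rwa [hl, List.prod_replicate] at hprod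
  · exact fun h => ⟨.replicate m x, coe_replicate m x, by rw [List.prod_replicate, h]⟩

theorem pow_mem_piSet_replicate_add_replicate (x y : G) (k : ℕ) :
    (x * y) ^ k ∈ piSet (replicate k x + replicate k y) := by
  induction k with
  | zero => exact ⟨[], rfl, (pow_zero _).symm⟩
  | succ k ih =>
    obtain ⟨l, hl, hprod⟩ := ih
    refine ⟨x :: y :: l, ?_, ?_⟩
    · rw [replicate_succ, replicate_succ, cons_add, add_cons, ← hl]
      rfl
    · rw [List.prod_cons, List.prod_cons, hprod, ← mul_assoc, ← pow_succ']

theorem isPOAtom_replicate_add_replicate_iff {b c : G} (hbc : b ≠ c) {p q : ℕ} :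
    IsPOAtom (replicate p b + replicate q c) ↔
      p + q ≠ 0 ∧ IsProductOne (replicate p b + replicate q c) ∧
        ∀ p₁ q₁ p₂ q₂, IsProductOne (replicate p₁ b + replicate q₁ c) →
          IsProductOne (replicate p₂ b + replicate q₂ c) → p₁ + p₂ = p → q₁ + q₂ = q →
            p₁ + q₁ = 0 ∨ p₂ + q₂ = 0 := by
  classical
  have hzero : ∀ {k m : ℕ}, replicate k b + replicate m c = 0 ↔ k + m = 0 := by
    intro k m
    rw [← card_eq_zero, card_add, card_replicate, card_replicate]
  simp only [IsPOAtom, ne_eq, hzero]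
  refine and_congr_right fun _ => and_congr_right fun _ =>
    ⟨fun h p₁ q₁ p₂ q₂ h₁ h₂ hp hq => ?_, fun h T U hT hU hTU => ?_⟩
  · rw [← hzero, ← hzero]
    exact h _ _ h₁ h₂ (by rw [← hp, ← hq, replicate_add, replicate_add, add_add_add_comm])
  · have hmem : ∀ x ∈ T + U, x = b ∨ x = c := by
      rw [hTU]
      intro x hx
      rcases mem_add.1 hx with hx | hx <;> simp [eq_of_mem_replicate hx]
    have hT' := eq_replicate_count_add_replicate_count hbc fun x hx =>
      hmem x (mem_add.2 (.inl hx))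
    have hU' := eq_replicate_count_add_replicate_count hbc fun x hx =>
      hmem x (mem_add.2 (.inr hx))
    have hcb : T.count b + U.count b = p := by
      simpa [count_replicate, hbc.symm] using congrArg (count b) hTU
    have hcc : T.count c + U.count c = q := by
      simpa [count_replicate, hbc] using congrArg (count c) hTU
    rw [hT', hU', hzero, hzero]
    exact h _ _ _ _ (hT' ▸ hT) (hU' ▸ hU) hcb hcc

end ProductOne

namespace List

variable {α : Type*} [DecidableEq α]

def alternatingCount (x : α) (l : List α) : ℤ :=
  (l.map fun y => if y = x then 1 else 0).alternatingSum

@[simp]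
theorem alternatingCount_nil (x : α) : [].alternatingCount x = 0 := rfl

@[simp]
theorem alternatingCount_cons (x y : α) (l : List α) :
    (y :: l).alternatingCount x = (if y = x then 1 else 0) - l.alternatingCount x :=
  alternatingSum_cons _ _

theorem abs_alternatingCount_le_count (x : α) (l : List α) :
    |l.alternatingCount x| ≤ l.count x := by
  induction l with
  | nil => simp
  | cons y l ih =>
    rw [alternatingCount_cons, count_cons]
    refine (abs_sub _ _).trans ?_
    by_cases h : y = x <;> simp [h] <;> omega

theorem alternatingCount_emod_two (x : α) (l : List α) :
    l.alternatingCount x % 2 = l.count x % 2 := by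
  induction l with
  | nil => simp
  | cons y l ih =>
    rw [alternatingCount_cons, count_cons]
    by_cases h : y = x <;> simp [h] <;> omega

theorem alternatingCount_add_alternatingCount {x y : α} (hxy : x ≠ y) {l : List α}
    (hl : ∀ z ∈ l, z = x ∨ z = y) :
    l.alternatingCount x + l.alternatingCount y = if Even l.length then 0 else 1 := by
  induction l with
  | nil => simp
  | cons z l ih =>
    have ih := ih fun w hw => hl w (mem_cons_of_mem _ hw)
    simp only [alternatingCount_cons, length_cons, Nat.even_add_one]
    rcases hl z mem_cons_self with rfl | rfl <;> split_ifs at ih ⊢ <;> simp_all <;> omega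

end List

namespace DihedralGroup

variable {n : ℕ}

theorem sr_zero_ne_sr_neg_one (hn : n ≠ 1) : (sr 0 : DihedralGroup n) ≠ sr (-1) := by
  have := ZMod.nontrivial_iff.2 hn
  simp

theorem prod_eq_ite_alternatingCount {l : List (DihedralGroup n)}
    (hl : ∀ x ∈ l, x = sr 0 ∨ x = sr (-1)) :
    l.prod = if Even l.length then r (l.alternatingCount (sr (-1)) : ZMod n)
      else sr (-l.alternatingCount (sr (-1)) : ZMod n) := by
  induction l with
  | nil => simp
  | cons x l ih =>
    have hx : x = sr (-((if x = sr (-1) then 1 else 0 : ℤ) : ZMod n)) := by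
      rcases hl x List.mem_cons_self with rfl | rfl <;> split_ifs <;> simp_all
    rw [List.prod_cons, ih fun y hy => hl y (List.mem_cons_of_mem _ hy)]
    simp only [List.alternatingCount_cons, List.length_cons, Nat.even_add_one]
    conv_lhs => rw [hx]
    split_ifs <;> simp only [sr_mul_r, sr_mul_sr, sr.injEq, r.injEq] <;> push_cast <;> ring

theorem count_sr_of_prod_eq_one (hn : n ≠ 1) {l : List (DihedralGroup n)}
    (hl : ∀ x ∈ l, x = sr 0 ∨ x = sr (-1)) (hprod : l.prod = 1) :
    (Even (l.count (sr 0)) ∧ Even (l.count (sr (-1)))) ∨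
      (Odd (l.count (sr 0)) ∧ Odd (l.count (sr (-1))) ∧
        n ≤ l.count (sr 0) ∧ n ≤ l.count (sr (-1))) := by
  set h := l.alternatingCount (sr (-1))
  rw [prod_eq_ite_alternatingCount hl] at hprod
  split_ifs at hprod with heven
  swap
  · exact absurd hprod (by simp [one_def, -r_zero])
  have hdvd : (n : ℤ) ∣ h := by
    rwa [one_def, r.injEq, ZMod.intCast_zmod_eq_zero_iff_dvd] at hprod
  have hb : l.alternatingCount (sr 0) = -h := by
    have := List.alternatingCount_add_alternatingCount (sr_zero_ne_sr_neg_one hn) hl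
    rw [if_pos heven] at this
    omega
  have hc_le := abs_le.1 (List.abs_alternatingCount_le_count (sr (-1)) l)
  have hb_le := abs_le.1 (List.abs_alternatingCount_le_count (sr 0) l)
  have hc_mod := List.alternatingCount_emod_two (sr (-1)) l
  have hb_mod := List.alternatingCount_emod_two (sr 0) l
  rw [hb] at hb_le hb_mod
  simp only [Nat.even_iff, Nat.odd_iff]
  rcases Int.emod_two_eq_zero_or_one h with h_even | h_odd
  · omega
  · have : (n : ℤ) ≤ |h| := Int.le_of_dvd (abs_pos.2 (by omega)) ((dvd_abs _ _).2 hdvd)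
    rw [le_abs'] at this
    omega

theorem isProductOne_replicate_sr_add_replicate_sr_iff (hn : n ≠ 1) (ho : Odd n) {p q : ℕ} :
    IsProductOne (replicate p (sr 0 : DihedralGroup n) + replicate q (sr (-1))) ↔
      (Even p ∧ Even q) ∨ (Odd p ∧ Odd q ∧ n ≤ p ∧ n ≤ q) := by
  have hbc := sr_zero_ne_sr_neg_one hn
  constructor
  · rintro ⟨l, hl, hprod⟩
    have hcount : ∀ x, l.count x = (replicate p (sr 0) + replicate q (sr (-1))).count x :=
      fun x => by rw [← hl, coe_count]
    have hmem : ∀ x ∈ l, x = sr 0 ∨ x = sr (-1) := fun x hx => by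
      have hx : x ∈ (l : Multiset (DihedralGroup n)) := mem_coe.2 hx
      rw [hl, mem_add] at hx
      exact hx.imp eq_of_mem_replicate eq_of_mem_replicate
    simpa [hcount, count_replicate, hbc, hbc.symm] using count_sr_of_prod_eq_one hn hmem hprod
  · have hsr : ∀ {i : ZMod n} {m : ℕ}, Even m → IsProductOne (replicate m (sr i)) := fun hm =>
      isProductOne_replicate_iff.2 <| by
        rw [← orderOf_dvd_iff_pow_eq_one, orderOf_sr]
        exact even_iff_two_dvd.1 hm
    rintro (⟨hp, hq⟩ | ⟨hp, hq, hnp, hnq⟩)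
    · exact (hsr hp).add (hsr hq)
    obtain ⟨p, rfl⟩ := Nat.exists_eq_add_of_le hnp
    obtain ⟨q, rfl⟩ := Nat.exists_eq_add_of_le hnq
    rw [replicate_add, replicate_add, add_add_add_comm]
    refine IsProductOne.add ?_
      ((hsr ((Nat.odd_add.1 hp).1 ho)).add (hsr ((Nat.odd_add.1 hq).1 ho)))
    have := pow_mem_piSet_replicate_add_replicate (sr 0 : DihedralGroup n) (sr (-1)) n
    rwa [sr_mul_sr, r_pow, ZMod.natCast_self, mul_zero, r_zero] at this

theorem isPOAtom_replicate_sr_add_replicate_sr_iff (hn : n ≠ 1) (ho : Odd n) {p q : ℕ} :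
    IsPOAtom (replicate p (sr 0 : DihedralGroup n) + replicate q (sr (-1))) ↔
      (p = 2 ∧ q = 0) ∨ (p = 0 ∧ q = 2) ∨ (p = n ∧ q = n) := by
  rw [isPOAtom_replicate_add_replicate_iff (sr_zero_ne_sr_neg_one hn)]
  simp only [isProductOne_replicate_sr_add_replicate_sr_iff hn ho, Nat.even_iff, Nat.odd_iff]
  have ho := Nat.odd_iff.1 ho
  constructor
  · rintro ⟨hpq, hpo, hmin⟩
    by_cases hp : 2 ≤ p ∧ (p % 2 = 0 ∨ n + 2 ≤ p)
    · have := hmin 2 0 (p - 2) q (by omega) (by omega) (by omega) (zero_add q)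
      omega
    by_cases hq : 2 ≤ q ∧ (q % 2 = 0 ∨ n + 2 ≤ q)
    · have := hmin 0 2 p (q - 2) (by omega) (by omega) (zero_add p) (by omega)
      omega
    omega
  · intro h
    refine ⟨by omega, by omega, fun p₁ q₁ p₂ q₂ h₁ h₂ hp hq => by omega⟩

end DihedralGroup

theorem stmt15 (n : ℕ) (hn : 3 ≤ n) (ho : Odd n) :
    {S : Multiset (DihedralGroup n) |
        (∀ x ∈ S, x = DihedralGroup.sr 0 ∨ x = DihedralGroup.r 1 * DihedralGroup.sr 0) ∧
        IsPOAtom S} =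
      {Multiset.replicate 2 (DihedralGroup.sr 0),
       Multiset.replicate 2 (DihedralGroup.r 1 * DihedralGroup.sr 0),
       Multiset.replicate n (DihedralGroup.sr 0) +
         Multiset.replicate n (DihedralGroup.r 1 * DihedralGroup.sr 0)} := by
  have hn1 : n ≠ 1 := by omega
  have hatom := fun p q => isPOAtom_replicate_sr_add_replicate_sr_iff hn1 ho (p := p) (q := q)
  ext S
  simp only [Set.mem_ofPred_eq, Set.mem_insert_iff, Set.mem_singleton_iff, r_mul_sr,
    zero_sub]
  constructor
  · rintro ⟨hS, hA⟩
    rw [eq_replicate_count_add_replicate_count (sr_zero_ne_sr_neg_one hn1) hS] at hA ⊢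
    rcases (hatom _ _).1 hA with ⟨hp, hq⟩ | ⟨hp, hq⟩ | ⟨hp, hq⟩ <;> simp [hp, hq]
  · rintro (rfl | rfl | rfl)
    · simpa using (hatom 2 0).2 (by simp)
    · simpa using (hatom 0 2).2 (by simp)
    · exact ⟨fun x hx => (mem_add.1 hx).imp eq_of_mem_replicate eq_of_mem_replicate,
        (hatom n n).2 (by simp)⟩
end

section
/- Let n ≥ 3 be odd and G = D_{2n} the dihedral group of order 2n. Then {2, D(G)} = {2, 2n} is an element of L(G), the system of sets of lengths of B(G); moreover there exists L ∈ L(G) with {2, 2n} strictly contained in L. Concretely, for S = b^{[n]}·(ab)^{[n]} one has L(S·S) = {2, 2n}, and for T = a^{[2n-2]}·b^{[2]} (which is an atom) one has {2, n+2, 2n} ⊆ L(T·T^{-1}). -/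
section General
variable {G : Type*} [Group G]

lemma isProductOne_zero : IsProductOne (0 : Multiset G) := ⟨[], rfl, rfl⟩

lemma isProductOne_add {S T : Multiset G} (hS : IsProductOne S) (hT : IsProductOne T) :
    IsProductOne (S + T) := by
  obtain ⟨l, hl, hp⟩ := hS; obtain ⟨m, hm, hq⟩ := hT
  exact ⟨l ++ m, by rw [← Multiset.coe_add, hl, hm], by simp [hp, hq]⟩

lemma isProductOne_map_inv {S : Multiset G} (hS : IsProductOne S) :
    IsProductOne (S.map fun g => g⁻¹) := by
  obtain ⟨l, hl, hp⟩ := hS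
  refine ⟨(l.map fun g => g⁻¹).reverse, ?_, ?_⟩
  · rw [Multiset.coe_reverse, ← Multiset.map_coe, hl]
  · rw [← List.prod_inv_reverse, hp, inv_one]

lemma isPOAtom_map_inv {S : Multiset G} (hS : IsPOAtom S) : IsPOAtom (S.map fun g => g⁻¹) := by
  obtain ⟨h0, h1, h2⟩ := hS
  refine ⟨by simpa using h0, isProductOne_map_inv h1, ?_⟩
  intro T U hT hU hTU
  have hS' : T.map (fun g => g⁻¹) + U.map (fun g => g⁻¹) = S := by
    have := congrArg (Multiset.map fun g : G => g⁻¹) hTU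
    simpa [Multiset.map_map, Function.comp] using this
  rcases h2 _ _ (isProductOne_map_inv hT) (isProductOne_map_inv hU) hS' with h | h
  · left; simpa using h
  · right; simpa using h

lemma singleton_not_productOne {x : G} (hx : x ≠ 1) : ¬ IsProductOne ({x} : Multiset G) := by
  rintro ⟨l, hl, hp⟩
  have : l = [x] := by exact_mod_cast hl
  subst this
  rw [List.prod_cons, List.prod_nil, mul_one] at hp
  exact hx hp

lemma mem_le_listSum {L : List (Multiset G)} {A : Multiset G} (h : A ∈ L) : A ≤ L.sum := by
  induction L with
  | nil => simp at h
  | cons B L ih =>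
    rw [List.sum_cons]
    rcases List.mem_cons.mp h with rfl | h
    · exact Multiset.le_add_right _ _
    · exact le_trans (ih h) (Multiset.le_add_left _ _)

lemma two_elt_decomp [DecidableEq G] {x y : G} (hxy : x ≠ y) (M : Multiset G)
    (h : ∀ z ∈ M, z = x ∨ z = y) :
    M = Multiset.replicate (M.count x) x + Multiset.replicate (M.count y) y := by
  induction M using Multiset.induction with
  | empty => simp
  | cons z M ih =>
    have hM := ih (fun w hw => h w (Multiset.mem_cons_of_mem hw))
    rcases h z (Multiset.mem_cons_self _ _) with rfl | rfl
    · rw [Multiset.count_cons_self, Multiset.count_cons_of_ne (Ne.symm hxy),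
        Multiset.replicate_succ, Multiset.cons_add, ← hM]
    · rw [Multiset.count_cons_self, Multiset.count_cons_of_ne hxy,
        Multiset.replicate_succ, Multiset.add_cons, ← hM]

lemma atom_pair {g h : G} (hg : g ≠ 1) (hh : h ≠ 1) (hgh : g * h = 1) :
    IsPOAtom (g ::ₘ {h}) := by
  refine ⟨by simp, ⟨[g, h], rfl, by simp [hgh]⟩, ?_⟩
  intro T U hT hU hTU
  by_contra hcon
  push_neg at hcon
  obtain ⟨hT0, hU0⟩ := hcon
  have hcard : Multiset.card T + Multiset.card U = 2 := by
    rw [← Multiset.card_add, hTU]; rfl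
  have hT1 : Multiset.card T = 1 := by
    have h1 := Multiset.card_pos.mpr hT0
    have h2 := Multiset.card_pos.mpr hU0
    omega
  obtain ⟨x, rfl⟩ := Multiset.card_eq_one.mp hT1
  have hxmem : x ∈ g ::ₘ ({h} : Multiset G) := by
    rw [← hTU]; exact Multiset.mem_add.mpr (Or.inl (Multiset.mem_singleton_self x))
  have hx1 : x = 1 := by
    by_contra hx
    exact singleton_not_productOne hx hT
  rcases Multiset.mem_cons.mp hxmem with rfl | h'
  · exact hg hx1
  · rw [Multiset.mem_singleton] at h'
    subst h'
    exact hh hx1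

end General

section General2
variable {G : Type*} [Group G]

set_option linter.unusedSectionVars false

lemma cons_cons_add (x y : G) (s t : Multiset G) :
    x ::ₘ y ::ₘ (s + t) = (x ::ₘ s) + (y ::ₘ t) := by
  rw [Multiset.cons_add, Multiset.add_cons]

lemma alt_list (x y : G) (k : ℕ) :
    ∃ l : List G, (↑l : Multiset G) = Multiset.replicate k x + Multiset.replicate k y ∧
      l.prod = (x * y) ^ k := by
  induction k with
  | zero => exact ⟨[], by simp, by simp⟩
  | succ k ih =>
    obtain ⟨l, hl, hp⟩ := ih
    refine ⟨x :: y :: l, ?_, ?_⟩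
    · rw [← Multiset.cons_coe, ← Multiset.cons_coe, hl, Multiset.replicate_succ,
        Multiset.replicate_succ, ← cons_cons_add]
    · rw [List.prod_cons, List.prod_cons, hp, pow_succ', mul_assoc]

lemma even_rep_productOne {x : G} (hx : x * x = 1) {s : ℕ} (hs : Even s) :
    IsProductOne (Multiset.replicate s x) := by
  obtain ⟨k, rfl⟩ := hs
  obtain ⟨l, hl, hp⟩ := alt_list x x k
  exact ⟨l, by rw [hl, ← Multiset.replicate_add], by rw [hp, hx, one_pow]⟩

lemma sum_replicate_pair (x y : G) (k : ℕ) :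
    (List.replicate k (x ::ₘ ({y} : Multiset G))).sum
      = Multiset.replicate k x + Multiset.replicate k y := by
  induction k with
  | zero => simp
  | succ k ih =>
    rw [List.replicate_succ, List.sum_cons, ih, Multiset.replicate_succ,
      Multiset.replicate_succ, ← cons_cons_add]
    rfl

lemma sum_replicate_rep2 (g : G) (k : ℕ) :
    (List.replicate k (Multiset.replicate 2 g)).sum = Multiset.replicate (2 * k) g := by
  induction k with
  | zero => simp
  | succ k ih =>
    rw [List.replicate_succ, List.sum_cons, ih, ← Multiset.replicate_add]
    congr 1
    omega

lemma count_listSum [DecidableEq G] (g : G) (L : List (Multiset G)) :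
    Multiset.count g L.sum = (L.map (Multiset.count g)).sum := by
  induction L with
  | nil => simp
  | cons A L ih => simp [ih]

end General2

open DihedralGroup

lemma key1 {n : ℕ} (hne : (sr 0 : DihedralGroup n) ≠ sr (-1)) :
    ∀ (N : ℕ) (l : List (DihedralGroup n)),
    l.length ≤ N → (∀ x ∈ l, x = sr 0 ∨ x = sr (-1)) →
    (Even l.length →
      ∃ d : ℤ, l.prod = r ((d : ℤ) : ZMod n) ∧ d.natAbs ≤ l.count (sr 0) ∧
        d.natAbs ≤ l.count (sr (-1)) ∧ (2 : ℤ) ∣ d - l.count (sr (-1)))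
    ∧ (¬ Even l.length → ∃ c, l.prod = sr c) := by
  intro N
  induction N using Nat.strong_induction_on with
  | _ N ih =>
    intro l hlen hmem
    match l with
    | [] =>
      refine ⟨fun _ => ⟨0, by simp, by simp, by simp, by simp⟩, fun h => ?_⟩
      simp at h
    | [x] =>
      refine ⟨fun h => by simp at h, fun _ => ?_⟩
      rcases hmem x (by simp) with rfl | rfl <;>
        · simp only [List.prod_cons, List.prod_nil, mul_one]
          exact ⟨_, rfl⟩
    | x :: y :: l' =>
      have hlen' : l'.length ≤ N - 2 := by
        simp only [List.length_cons] at hlen; omega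
      have hN2 : N - 2 < N := by
        simp only [List.length_cons] at hlen; omega
      have hl' := ih (N - 2) hN2 l' hlen' (fun z hz => hmem z (by simp [hz]))
      have hprod : (x :: y :: l').prod = x * (y * l'.prod) := by
        rw [List.prod_cons, List.prod_cons]
      constructor
      · intro heven
        have he' : Even l'.length := by
          simp only [List.length_cons] at heven ⊢
          rcases heven with ⟨k, hk⟩; exact ⟨k - 1, by omega⟩
        obtain ⟨d, hd, h1, h2, h3⟩ := hl'.1 he'
        rcases hmem x (by simp) with rfl | rfl <;> rcases hmem y (by simp) with rfl | rfl
        · have c0 : (sr 0 :: sr 0 :: l').count (sr (0 : ZMod n)) = l'.count (sr 0) + 2 := by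
            simp [List.count_cons]
          have c1 : (sr 0 :: sr 0 :: l').count (sr (-1 : ZMod n)) = l'.count (sr (-1)) := by
            simp [List.count_cons, hne, hne.symm]
          refine ⟨d, ?_, ?_, ?_, ?_⟩
          · rw [hprod, hd]; simp only [sr_mul_r, sr_mul_sr]; congr 1; push_cast; ring
          · rw [c0]; omega
          · rw [c1]; exact h2
          · rw [c1]; exact h3
        · have c0 : (sr 0 :: sr (-1) :: l').count (sr (0 : ZMod n)) = l'.count (sr 0) + 1 := by
            simp [List.count_cons, hne, hne.symm]
          have c1 : (sr 0 :: sr (-1) :: l').count (sr (-1 : ZMod n)) = l'.count (sr (-1)) + 1 := by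
            simp [List.count_cons, hne, hne.symm]
          refine ⟨d - 1, ?_, ?_, ?_, ?_⟩
          · rw [hprod, hd]; simp only [sr_mul_r, sr_mul_sr]; congr 1; push_cast; ring
          · rw [c0]; omega
          · rw [c1]; omega
          · rw [c1]; push_cast; omega
        · have c0 : (sr (-1) :: sr 0 :: l').count (sr (0 : ZMod n)) = l'.count (sr 0) + 1 := by
            simp [List.count_cons, hne, hne.symm]
          have c1 : (sr (-1) :: sr 0 :: l').count (sr (-1 : ZMod n)) = l'.count (sr (-1)) + 1 := by
            simp [List.count_cons, hne, hne.symm]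
          refine ⟨d + 1, ?_, ?_, ?_, ?_⟩
          · rw [hprod, hd]; simp only [sr_mul_r, sr_mul_sr]; congr 1; push_cast; ring
          · rw [c0]; omega
          · rw [c1]; omega
          · rw [c1]; push_cast; omega
        · have c0 : (sr (-1) :: sr (-1) :: l').count (sr (0 : ZMod n)) = l'.count (sr 0) := by
            simp [List.count_cons, hne, hne.symm]
          have c1 : (sr (-1) :: sr (-1) :: l').count (sr (-1 : ZMod n))
              = l'.count (sr (-1)) + 2 := by
            simp [List.count_cons]
          refine ⟨d, ?_, ?_, ?_, ?_⟩
          · rw [hprod, hd]; simp only [sr_mul_r, sr_mul_sr]; congr 1; push_cast; ring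
          · rw [c0]; exact h1
          · rw [c1]; omega
          · rw [c1]; push_cast; omega
      · intro hodd
        have ho' : ¬ Even l'.length := by
          simp only [List.length_cons] at hodd ⊢
          intro ⟨k, hk⟩; exact hodd ⟨k + 1, by omega⟩
        obtain ⟨c, hc⟩ := hl'.2 ho'
        rcases hmem x (by simp) with rfl | rfl <;> rcases hmem y (by simp) with rfl | rfl <;>
          · rw [hprod, hc]
            simp only [sr_mul_sr, r_mul_sr, sr_mul_r, r_mul_r]
            exact ⟨_, rfl⟩

lemma key2 {n : ℕ} (hne : (r 1 : DihedralGroup n) ≠ sr 0) (l : List (DihedralGroup n))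
    (h : ∀ x ∈ l, x = r 1 ∨ x = sr 0) :
    ∃ m : ℕ, m ≤ l.count (r 1) ∧
      l.prod = (if Even (l.count (sr 0)) then r else sr)
        ((((l.count (r 1) : ℤ) - 2 * m : ℤ) : ZMod n)) := by
  induction l with
  | nil => exact ⟨0, by simp, by simp⟩
  | cons x l ih =>
    obtain ⟨m, hm, hp⟩ := ih (fun z hz => h z (by simp [hz]))
    rcases h x (by simp) with rfl | rfl
    · have c0 : (r 1 :: l).count (r (1 : ZMod n)) = l.count (r 1) + 1 := by
        simp [List.count_cons]
      have c1 : (r 1 :: l).count (sr (0 : ZMod n)) = l.count (sr 0) := by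
        simp [List.count_cons, hne, hne.symm]
      by_cases he : Even (l.count (sr 0))
      · rw [if_pos he] at hp
        refine ⟨m, by omega, ?_⟩
        rw [c0, c1, if_pos he, List.prod_cons, hp, r_mul_r]
        congr 1; push_cast; ring
      · rw [if_neg he] at hp
        refine ⟨m + 1, by omega, ?_⟩
        rw [c0, c1, if_neg he, List.prod_cons, hp, r_mul_sr]
        congr 1; push_cast; ring
    · have c0 : (sr 0 :: l).count (r (1 : ZMod n)) = l.count (r 1) := by
        simp [List.count_cons, hne, hne.symm]
      have c1 : (sr 0 :: l).count (sr (0 : ZMod n)) = l.count (sr 0) + 1 := by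
        simp [List.count_cons]
      by_cases he : Even (l.count (sr 0))
      · rw [if_pos he] at hp
        have he' : ¬ Even (l.count (sr 0) + 1) := by simp [Nat.even_add_one, he]
        refine ⟨m, by omega, ?_⟩
        rw [c0, c1, if_neg he', List.prod_cons, hp, sr_mul_r]
        congr 1; push_cast; ring
      · rw [if_neg he] at hp
        have he' : Even (l.count (sr 0) + 1) := by simpa [Nat.even_add_one] using he
        refine ⟨m, by omega, ?_⟩
        rw [c0, c1, if_pos he', List.prod_cons, hp, sr_mul_sr]
        congr 1; push_cast; ring


section DihedralSpecific
open DihedralGroup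
variable {n : ℕ}

lemma cast_nat_dvd (hn : 3 ≤ n) {k : ℕ} (h : ((k : ℕ) : ZMod n) = 0) : n ∣ k := by
  haveI : NeZero n := ⟨by omega⟩
  exact (ZMod.natCast_eq_zero_iff k n).mp h

lemma sr_ne_one (c : ZMod n) : (sr c : DihedralGroup n) ≠ 1 := by rw [one_def]; intro h; cases h

lemma hne1 (hn : 3 ≤ n) : (sr 0 : DihedralGroup n) ≠ sr (-1) := by
  intro h
  simp only [sr.injEq] at h
  have h1 : ((1 : ℕ) : ZMod n) = 0 := by push_cast; linear_combination h
  have := cast_nat_dvd hn h1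
  have := Nat.le_of_dvd one_pos this
  omega

lemma r1_ne_one (hn : 3 ≤ n) : (r 1 : DihedralGroup n) ≠ 1 := by
  intro h
  rw [one_def] at h
  simp only [r.injEq] at h
  have h1 : ((1 : ℕ) : ZMod n) = 0 := by push_cast; linear_combination h
  have := cast_nat_dvd hn h1
  have := Nat.le_of_dvd one_pos this
  omega

lemma r1_ne_sr0 : (r 1 : DihedralGroup n) ≠ sr 0 := by simp

lemma a_ne_ainv (hn : 3 ≤ n) : (r 1 : DihedralGroup n) ≠ r (-1) := by
  intro h
  simp only [r.injEq] at h
  have h1 : ((2 : ℕ) : ZMod n) = 0 := by push_cast; linear_combination h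
  have := cast_nat_dvd hn h1
  have := Nat.le_of_dvd (by norm_num) this
  omega

lemma mem_of_coe {l : List (DihedralGroup n)} {M : Multiset (DihedralGroup n)}
    (hl : (↑l : Multiset (DihedralGroup n)) = M) {x : DihedralGroup n} (hx : x ∈ l) : x ∈ M := by
  rw [← hl]; exact Multiset.mem_coe.mpr hx

lemma odd_side (hn : 3 ≤ n) {M : Multiset (DihedralGroup n)}
    (hmem : ∀ x ∈ M, x = sr 0 ∨ x = sr (-1)) (hpo : IsProductOne M)
    (hodd : ¬ Even (M.count (sr (-1)))) :
    n ≤ M.count (sr 0) ∧ n ≤ M.count (sr (-1)) ∧ ¬ Even (M.count (sr 0)) := by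
  haveI : NeZero n := ⟨by omega⟩
  obtain ⟨l, hl, hp⟩ := hpo
  have hcb : l.count (sr (0 : ZMod n)) = M.count (sr 0) := by
    rw [← hl, Multiset.coe_count]
  have hcc : l.count (sr (-1 : ZMod n)) = M.count (sr (-1)) := by
    rw [← hl, Multiset.coe_count]
  have hmem' : ∀ x ∈ l, x = sr 0 ∨ x = sr (-1) := fun x hx => hmem x (mem_of_coe hl hx)
  have hk := key1 (hne1 hn) l.length l le_rfl hmem'
  by_cases he : Even l.length
  · obtain ⟨d, hd, h1, h2, h3⟩ := hk.1 he
    rw [hp] at hd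
    rw [one_def] at hd
    simp only [r.injEq] at hd
    have hdvd : ((n : ℕ) : ℤ) ∣ d := (ZMod.intCast_zmod_eq_zero_iff_dvd d n).mp hd.symm
    have hdvdnat : n ∣ d.natAbs := by
      have := Int.natAbs_dvd_natAbs.mpr hdvd
      simpa using this
    have hodd' : M.count (sr (-1)) % 2 = 1 := Nat.not_even_iff.mp hodd
    rw [hcb] at h1
    rw [hcc] at h2 h3
    have hd0 : d.natAbs ≠ 0 := by omega
    have hledabs : n ≤ d.natAbs := Nat.le_of_dvd (by omega) hdvdnat
    have hlen : l.length = M.count (sr 0) + M.count (sr (-1)) := by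
      have hM := two_elt_decomp (hne1 hn) M hmem
      have hcard : Multiset.card M = l.length := by rw [← hl, Multiset.coe_card]
      rw [hM] at hcard
      simp only [Multiset.card_add, Multiset.card_replicate] at hcard
      omega
    refine ⟨by omega, by omega, ?_⟩
    rw [hlen] at he
    rcases he with ⟨k, hk'⟩
    rw [Nat.not_even_iff]
    omega
  · obtain ⟨c, hc⟩ := hk.2 he
    rw [hp] at hc
    exact absurd hc.symm (sr_ne_one c)

lemma even_card (hn : 3 ≤ n) {M : Multiset (DihedralGroup n)}
    (hmem : ∀ x ∈ M, x = sr 0 ∨ x = sr (-1)) (hpo : IsProductOne M) :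
    Even (M.count (sr 0) + M.count (sr (-1))) := by
  obtain ⟨l, hl, hp⟩ := hpo
  have hmem' : ∀ x ∈ l, x = sr 0 ∨ x = sr (-1) := fun x hx => hmem x (mem_of_coe hl hx)
  have hk := key1 (hne1 hn) l.length l le_rfl hmem'
  by_cases he : Even l.length
  · have hlen : l.length = M.count (sr 0) + M.count (sr (-1)) := by
      have hM := two_elt_decomp (hne1 hn) M hmem
      have hcard : Multiset.card M = l.length := by rw [← hl, Multiset.coe_card]
      rw [hM] at hcard
      simp only [Multiset.card_add, Multiset.card_replicate] at hcard
      omega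
    rwa [hlen] at he
  · obtain ⟨c, hc⟩ := hk.2 he
    rw [hp] at hc
    exact absurd hc.symm (sr_ne_one c)

end DihedralSpecific

section Part1
open DihedralGroup
variable {n : ℕ}

lemma U_productOne (hn : 3 ≤ n) :
    IsProductOne (Multiset.replicate n (sr (0 : ZMod n)) + Multiset.replicate n (sr (-1))) := by
  obtain ⟨l, hl, hp⟩ := alt_list (sr (-1 : ZMod n)) (sr 0) n
  refine ⟨l, by rw [hl, add_comm], ?_⟩
  rw [hp]
  have h1 : (sr (-1 : ZMod n)) * sr 0 = r 1 := by
    rw [sr_mul_sr]; congr 1; ring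
  rw [h1, r_one_pow, ZMod.natCast_self, ← one_def]

lemma evens_productOne {s t : ℕ} (hs : Even s) (ht : Even t) :
    IsProductOne (Multiset.replicate s (sr (0 : ZMod n)) + Multiset.replicate t (sr (-1))) :=
  isProductOne_add (even_rep_productOne (sr_mul_self 0) hs)
    (even_rep_productOne (sr_mul_self (-1)) ht)

lemma isPOAtom_rep2 {G : Type*} [Group G] {g : G} (hg : g ≠ 1) (h : g * g = 1) :
    IsPOAtom (Multiset.replicate 2 g) := by
  have h2 : Multiset.replicate 2 g = g ::ₘ {g} := rfl
  rw [h2]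
  exact atom_pair hg hg h

lemma U_atom (hn : 3 ≤ n) (ho : Odd n) :
    IsPOAtom (Multiset.replicate n (sr (0 : ZMod n)) + Multiset.replicate n (sr (-1))) := by
  refine ⟨?_, U_productOne hn, ?_⟩
  · intro h
    have := congrArg Multiset.card h
    simp at this
    omega
  intro T V hT hV hTV
  have hmemU : ∀ x ∈ (Multiset.replicate n (sr (0 : ZMod n)) + Multiset.replicate n (sr (-1))),
      x = sr 0 ∨ x = sr (-1) := by
    intro x hx
    rcases Multiset.mem_add.mp hx with h | h
    · exact Or.inl (Multiset.eq_of_mem_replicate h)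
    · exact Or.inr (Multiset.eq_of_mem_replicate h)
  have hmemT : ∀ x ∈ T, x = sr 0 ∨ x = sr (-1) := fun x hx =>
    hmemU x (by rw [← hTV]; exact Multiset.mem_add.mpr (Or.inl hx))
  have hmemV : ∀ x ∈ V, x = sr 0 ∨ x = sr (-1) := fun x hx =>
    hmemU x (by rw [← hTV]; exact Multiset.mem_add.mpr (Or.inr hx))
  have hc0 : T.count (sr (0 : ZMod n)) + V.count (sr 0) = n := by
    have := congrArg (Multiset.count (sr (0 : ZMod n))) hTV
    rwa [Multiset.count_add, Multiset.count_add, Multiset.count_replicate, if_pos rfl,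
      Multiset.count_replicate, if_neg (hne1 hn).symm, add_zero] at this
  have hc1 : T.count (sr (-1 : ZMod n)) + V.count (sr (-1)) = n := by
    have := congrArg (Multiset.count (sr (-1 : ZMod n))) hTV
    rwa [Multiset.count_add, Multiset.count_add, Multiset.count_replicate,
      if_neg (hne1 hn), Multiset.count_replicate, if_pos rfl, zero_add] at this
  have hTd := two_elt_decomp (hne1 hn) T hmemT
  have hVd := two_elt_decomp (hne1 hn) V hmemV
  obtain ⟨w, hw⟩ := ho
  by_cases hodd : Even (T.count (sr (-1 : ZMod n)))
  · have hoddV : ¬ Even (V.count (sr (-1 : ZMod n))) := by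
      rw [Nat.even_iff] at hodd ⊢
      omega
    obtain ⟨hn0, hn1, _⟩ := odd_side hn hmemV hV hoddV
    left
    rw [hTd]
    have e0 : T.count (sr (0 : ZMod n)) = 0 := by omega
    have e1 : T.count (sr (-1 : ZMod n)) = 0 := by omega
    rw [e0, e1]
    simp
  · obtain ⟨hn0, hn1, _⟩ := odd_side hn hmemT hT hodd
    right
    rw [hVd]
    have e0 : V.count (sr (0 : ZMod n)) = 0 := by omega
    have e1 : V.count (sr (-1 : ZMod n)) = 0 := by omega
    rw [e0, e1]
    simp

lemma atom_classify (hn : 3 ≤ n) (ho : Odd n) {A : Multiset (DihedralGroup n)}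
    (hA : IsPOAtom A) (hmem : ∀ x ∈ A, x = sr 0 ∨ x = sr (-1)) :
    A = Multiset.replicate 2 (sr 0) ∨ A = Multiset.replicate 2 (sr (-1)) ∨
      A = Multiset.replicate n (sr (0 : ZMod n)) + Multiset.replicate n (sr (-1)) := by
  obtain ⟨hA0, hA1, hA2⟩ := hA
  have hAdec := two_elt_decomp (hne1 hn) A hmem
  have heven := even_card hn hmem hA1
  set s := A.count (sr (0 : ZMod n)) with hs_def
  set t := A.count (sr (-1 : ZMod n)) with ht_def
  obtain ⟨w, hw⟩ := ho
  by_cases ht : Even t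
  · have hs : Even s := by rw [Nat.even_iff] at *; omega
    by_cases hs2 : 2 ≤ s
    · have hsplit : Multiset.replicate 2 (sr (0 : ZMod n)) +
          (Multiset.replicate (s - 2) (sr 0) + Multiset.replicate t (sr (-1))) = A := by
        rw [hAdec, ← add_assoc, ← Multiset.replicate_add]
        congr 2
        omega
      have hcompl : IsProductOne (Multiset.replicate (s - 2) (sr (0 : ZMod n)) +
          Multiset.replicate (t) (sr (-1))) :=
        evens_productOne (by rw [Nat.even_iff] at *; omega) ht
      rcases hA2 _ _ (even_rep_productOne (sr_mul_self 0) (by norm_num)) hcompl hsplit with h | h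
      · exfalso
        have := congrArg Multiset.card h
        simp at this
      · have := congrArg Multiset.card h
        simp only [Multiset.card_add, Multiset.card_replicate, Multiset.card_zero] at this
        have hs2' : s = 2 := by omega
        have ht0 : t = 0 := by omega
        left
        rw [hAdec, hs2', ht0]
        simp
    · by_cases ht2 : 2 ≤ t
      · have hsplit : Multiset.replicate 2 (sr (-1 : ZMod n)) +
            (Multiset.replicate s (sr 0) + Multiset.replicate (t - 2) (sr (-1))) = A := by
          rw [hAdec]
          have : Multiset.replicate t (sr (-1 : ZMod n)) =
              Multiset.replicate 2 (sr (-1)) + Multiset.replicate (t - 2) (sr (-1)) := by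
            rw [← Multiset.replicate_add]
            congr 1
            omega
          rw [this]
          simp only [add_comm, add_left_comm, add_assoc]
        have hcompl : IsProductOne (Multiset.replicate s (sr (0 : ZMod n)) +
            Multiset.replicate (t - 2) (sr (-1))) :=
          evens_productOne hs (by rw [Nat.even_iff] at *; omega)
        rcases hA2 _ _ (even_rep_productOne (sr_mul_self (-1)) (by norm_num)) hcompl hsplit
          with h | h
        · exfalso
          have := congrArg Multiset.card h
          simp at this
        · have := congrArg Multiset.card h
          simp only [Multiset.card_add, Multiset.card_replicate, Multiset.card_zero] at this
          have ht2' : t = 2 := by omega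
          have hs0 : s = 0 := by omega
          right; left
          rw [hAdec, ht2', hs0]
          simp
      · exfalso
        apply hA0
        rw [Nat.even_iff] at hs ht
        have hs0 : s = 0 := by omega
        have ht0 : t = 0 := by omega
        rw [hAdec, hs0, ht0]
        simp
  · obtain ⟨hns, hnt, hsodd⟩ := odd_side hn hmem hA1 ht
    rw [← hs_def] at hns hsodd
    rw [← ht_def] at hnt
    have hsplit : (Multiset.replicate n (sr (0 : ZMod n)) + Multiset.replicate n (sr (-1))) +
        (Multiset.replicate (s - n) (sr 0) + Multiset.replicate (t - n) (sr (-1))) = A := by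
      rw [hAdec]
      have h1 : Multiset.replicate s (sr (0 : ZMod n)) =
          Multiset.replicate n (sr 0) + Multiset.replicate (s - n) (sr 0) := by
        rw [← Multiset.replicate_add]; congr 1; omega
      have h2 : Multiset.replicate t (sr (-1 : ZMod n)) =
          Multiset.replicate n (sr (-1)) + Multiset.replicate (t - n) (sr (-1)) := by
        rw [← Multiset.replicate_add]; congr 1; omega
      rw [h1, h2]
      simp only [add_comm, add_left_comm, add_assoc]
    have hcompl : IsProductOne (Multiset.replicate (s - n) (sr (0 : ZMod n)) +
        Multiset.replicate (t - n) (sr (-1))) := by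
      apply evens_productOne
      · rw [Nat.even_iff]
        rw [Nat.not_even_iff] at hsodd ht
        rw [Nat.even_iff] at heven
        omega
      · rw [Nat.even_iff]
        rw [Nat.not_even_iff] at ht
        omega
    rcases hA2 _ _ (U_productOne hn) hcompl hsplit with h | h
    · exfalso
      have := congrArg Multiset.card h
      simp at this
      omega
    · have := congrArg Multiset.card h
      simp only [Multiset.card_add, Multiset.card_replicate, Multiset.card_zero] at this
      have hsn : s = n := by omega
      have htn : t = n := by omega
      right; right
      rw [hAdec, hsn, htn]

end Part1

section Part1b
open DihedralGroup
variable {n : ℕ}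

lemma counting (hn : 3 ≤ n) (L : List (Multiset (DihedralGroup n)))
    (h : ∀ A ∈ L, A = Multiset.replicate 2 (sr 0) ∨ A = Multiset.replicate 2 (sr (-1)) ∨
      A = Multiset.replicate n (sr (0 : ZMod n)) + Multiset.replicate n (sr (-1))) :
    ∃ x y u : ℕ, L.length = x + y + u ∧
      Multiset.count (sr (0 : ZMod n)) L.sum = 2 * x + n * u ∧
      Multiset.count (sr (-1 : ZMod n)) L.sum = 2 * y + n * u := by
  induction L with
  | nil => exact ⟨0, 0, 0, by simp, by simp, by simp⟩
  | cons A L ih =>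
    obtain ⟨x, y, u, h1, h2, h3⟩ := ih (fun B hB => h B (by simp [hB]))
    rcases h A (by simp) with rfl | rfl | rfl
    · refine ⟨x + 1, y, u, ?_, ?_, ?_⟩
      · simp only [List.length_cons, h1]; ring
      · rw [List.sum_cons, Multiset.count_add, h2, Multiset.count_replicate, if_pos rfl]; ring
      · rw [List.sum_cons, Multiset.count_add, h3, Multiset.count_replicate,
          if_neg (hne1 hn), zero_add]
    · refine ⟨x, y + 1, u, ?_, ?_, ?_⟩
      · simp only [List.length_cons, h1]; ring
      · rw [List.sum_cons, Multiset.count_add, h2, Multiset.count_replicate,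
          if_neg (hne1 hn).symm, zero_add]
      · rw [List.sum_cons, Multiset.count_add, h3, Multiset.count_replicate, if_pos rfl]; ring
    · refine ⟨x, y, u + 1, ?_, ?_, ?_⟩
      · simp only [List.length_cons, h1]; ring
      · rw [List.sum_cons, Multiset.count_add, h2, Multiset.count_add, Multiset.count_replicate,
          if_pos rfl, Multiset.count_replicate, if_neg (hne1 hn).symm, add_zero]
        ring
      · rw [List.sum_cons, Multiset.count_add, h3, Multiset.count_add, Multiset.count_replicate,
          if_neg (hne1 hn), Multiset.count_replicate, if_pos rfl, zero_add]
        ring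

lemma part1_s16 (hn : 3 ≤ n) (ho : Odd n) :
    lengthSet ((Multiset.replicate n (sr (0 : ZMod n)) + Multiset.replicate n (sr (-1))) +
      (Multiset.replicate n (sr (0 : ZMod n)) + Multiset.replicate n (sr (-1))))
      = {2, 2 * n} := by
  have hW0 : Multiset.count (sr (0 : ZMod n))
      ((Multiset.replicate n (sr (0 : ZMod n)) + Multiset.replicate n (sr (-1))) +
      (Multiset.replicate n (sr (0 : ZMod n)) + Multiset.replicate n (sr (-1)))) = 2 * n := by
    have e1 : Multiset.count (sr (0 : ZMod n)) (Multiset.replicate n (sr (0 : ZMod n))) = n := by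
      rw [Multiset.count_replicate, if_pos rfl]
    have e2 : Multiset.count (sr (0 : ZMod n)) (Multiset.replicate n (sr (-1 : ZMod n))) = 0 := by
      rw [Multiset.count_replicate, if_neg (hne1 hn).symm]
    simp only [Multiset.count_add, e1, e2]
    omega
  have hW1 : Multiset.count (sr (-1 : ZMod n))
      ((Multiset.replicate n (sr (0 : ZMod n)) + Multiset.replicate n (sr (-1))) +
      (Multiset.replicate n (sr (0 : ZMod n)) + Multiset.replicate n (sr (-1)))) = 2 * n := by
    have e1 : Multiset.count (sr (-1 : ZMod n)) (Multiset.replicate n (sr (0 : ZMod n))) = 0 := by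
      rw [Multiset.count_replicate, if_neg (hne1 hn)]
    have e2 : Multiset.count (sr (-1 : ZMod n)) (Multiset.replicate n (sr (-1 : ZMod n))) = n := by
      rw [Multiset.count_replicate, if_pos rfl]
    simp only [Multiset.count_add, e1, e2]
    omega
  ext k
  simp only [Set.mem_insert_iff, Set.mem_singleton_iff]
  constructor
  · rintro ⟨L, hlen, hatoms, hsum⟩
    have hmemL : ∀ A ∈ L, A = Multiset.replicate 2 (sr 0) ∨
        A = Multiset.replicate 2 (sr (-1)) ∨
        A = Multiset.replicate n (sr (0 : ZMod n)) + Multiset.replicate n (sr (-1)) := by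
      intro A hA
      apply atom_classify hn ho (hatoms A hA)
      intro x hx
      have hle : A ≤ L.sum := mem_le_listSum hA
      have hxW := Multiset.mem_of_le hle hx
      rw [hsum] at hxW
      rcases Multiset.mem_add.mp hxW with h | h <;> rcases Multiset.mem_add.mp h with h' | h'
      · exact Or.inl (Multiset.eq_of_mem_replicate h')
      · exact Or.inr (Multiset.eq_of_mem_replicate h')
      · exact Or.inl (Multiset.eq_of_mem_replicate h')
      · exact Or.inr (Multiset.eq_of_mem_replicate h')
    obtain ⟨x, y, u, h1, h2, h3⟩ := counting hn L hmemL
    rw [hsum, hW0] at h2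
    rw [hsum, hW1] at h3
    have hu : u ≤ 2 := by nlinarith
    obtain ⟨w, hw⟩ := ho
    interval_cases u <;> omega
  · have hU := U_atom hn ho
    rintro (rfl | rfl)
    · refine ⟨[Multiset.replicate n (sr (0 : ZMod n)) + Multiset.replicate n (sr (-1)),
        Multiset.replicate n (sr (0 : ZMod n)) + Multiset.replicate n (sr (-1))], rfl, ?_, ?_⟩
      · intro A hA
        rcases List.mem_cons.mp hA with rfl | hA
        · exact hU
        · rcases List.mem_cons.mp hA with rfl | hA
          · exact hU
          · simp at hA
      · simp
    · refine ⟨List.replicate n (Multiset.replicate 2 (sr (0 : ZMod n))) ++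
        List.replicate n (Multiset.replicate 2 (sr (-1 : ZMod n))), ?_, ?_, ?_⟩
      · simp; ring
      · intro A hA
        rcases List.mem_append.mp hA with h | h
        · rw [List.eq_of_mem_replicate h]
          exact isPOAtom_rep2 (sr_ne_one 0) (sr_mul_self 0)
        · rw [List.eq_of_mem_replicate h]
          exact isPOAtom_rep2 (sr_ne_one (-1)) (sr_mul_self (-1))
      · rw [List.sum_append, sum_replicate_rep2, sum_replicate_rep2]
        have h1 : Multiset.replicate (2 * n) (sr (0 : ZMod n)) =
            Multiset.replicate n (sr 0) + Multiset.replicate n (sr 0) := by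
          rw [← Multiset.replicate_add]; congr 1; omega
        have h2 : Multiset.replicate (2 * n) (sr (-1 : ZMod n)) =
            Multiset.replicate n (sr (-1)) + Multiset.replicate n (sr (-1)) := by
          rw [← Multiset.replicate_add]; congr 1; omega
        rw [h1, h2]
        simp only [add_comm, add_left_comm, add_assoc]

end Part1b

section Part2
open DihedralGroup
variable {n : ℕ}

lemma sr0_ne_r1 : (sr 0 : DihedralGroup n) ≠ r 1 := by simp

lemma list_of_rep {G : Type*} {l : List G} {k : ℕ} {g : G}
    (h : (↑l : Multiset G) = Multiset.replicate k g) : l = List.replicate k g := by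
  rw [List.eq_replicate_iff]
  constructor
  · have := congrArg Multiset.card h
    simpa using this
  · intro b hb
    have : b ∈ Multiset.replicate k g := h ▸ Multiset.mem_coe.mpr hb
    exact Multiset.eq_of_mem_replicate this

lemma prodone_rep_a (hn : 3 ≤ n) {k : ℕ}
    (hpo : IsProductOne (Multiset.replicate k (r (1 : ZMod n)))) : n ∣ k := by
  obtain ⟨l, hl, hp⟩ := hpo
  rw [list_of_rep hl, List.prod_replicate, r_one_pow] at hp
  rw [one_def] at hp
  simp only [r.injEq] at hp
  exact cast_nat_dvd hn hp

lemma atom_rep_n_a (hn : 3 ≤ n) : IsPOAtom (Multiset.replicate n (r (1 : ZMod n))) := by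
  refine ⟨?_, ⟨List.replicate n (r 1), by rw [Multiset.coe_replicate],
    by rw [List.prod_replicate, r_one_pow, ZMod.natCast_self, ← one_def]⟩, ?_⟩
  · intro h
    have := congrArg Multiset.card h
    simp at this
    omega
  intro T V hT hV hTV
  have hmemT : ∀ x ∈ T, x = r 1 := fun x hx => Multiset.eq_of_mem_replicate
    (by rw [← hTV]; exact Multiset.mem_add.mpr (Or.inl hx))
  have hmemV : ∀ x ∈ V, x = r 1 := fun x hx => Multiset.eq_of_mem_replicate
    (by rw [← hTV]; exact Multiset.mem_add.mpr (Or.inr hx))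
  have hTd : T = Multiset.replicate (Multiset.card T) (r 1) :=
    (Multiset.eq_replicate_card).mpr hmemT
  have hVd : V = Multiset.replicate (Multiset.card V) (r 1) :=
    (Multiset.eq_replicate_card).mpr hmemV
  have hcard : Multiset.card T + Multiset.card V = n := by
    have := congrArg Multiset.card hTV
    simpa using this
  by_contra hc
  push_neg at hc
  obtain ⟨hT0, hV0⟩ := hc
  have h1 : 1 ≤ Multiset.card T := Multiset.card_pos.mpr hT0
  have h2 : 1 ≤ Multiset.card V := Multiset.card_pos.mpr hV0
  have hdvd : n ∣ Multiset.card T := prodone_rep_a hn (hTd ▸ hT)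
  have := Nat.le_of_dvd (by omega) hdvd
  omega

lemma odd_b_not_prodone (hn : 3 ≤ n) {M : Multiset (DihedralGroup n)}
    (hmem : ∀ x ∈ M, x = r 1 ∨ x = sr 0)
    (hodd : ¬ Even (M.count (sr (0 : ZMod n)))) : ¬ IsProductOne M := by
  rintro ⟨l, hl, hp⟩
  have hcc : l.count (sr (0 : ZMod n)) = M.count (sr 0) := by
    rw [← hl, Multiset.coe_count]
  obtain ⟨m, hm, hpr⟩ := key2 r1_ne_sr0 l (fun x hx => hmem x (mem_of_coe hl hx))
  rw [hcc, if_neg hodd, hp] at hpr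
  exact sr_ne_one _ hpr.symm

lemma Tsmall_not_prodone (hn : 3 ≤ n) (ho : Odd n) :
    ¬ IsProductOne (Multiset.replicate (n - 2) (r (1 : ZMod n)) +
      Multiset.replicate 2 (sr 0)) := by
  rintro ⟨l, hl, hp⟩
  have hmem : ∀ x ∈ l, x = r 1 ∨ x = sr 0 := by
    intro x hx
    have := mem_of_coe hl hx
    rcases Multiset.mem_add.mp this with h | h
    · exact Or.inl (Multiset.eq_of_mem_replicate h)
    · exact Or.inr (Multiset.eq_of_mem_replicate h)
  obtain ⟨m, hm, hpr⟩ := key2 r1_ne_sr0 l hmem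
  have hca : l.count (r (1 : ZMod n)) = n - 2 := by
    rw [← Multiset.coe_count, hl, Multiset.count_add, Multiset.count_replicate, if_pos rfl,
      Multiset.count_replicate, if_neg sr0_ne_r1, add_zero]
  have hcb : l.count (sr (0 : ZMod n)) = 2 := by
    rw [← Multiset.coe_count, hl, Multiset.count_add, Multiset.count_replicate,
      if_neg r1_ne_sr0, Multiset.count_replicate, if_pos rfl, zero_add]
  rw [hca, hcb, if_pos (by norm_num), hp] at hpr
  rw [one_def] at hpr
  simp only [r.injEq] at hpr
  have hdvd : ((n : ℕ) : ℤ) ∣ ((n - 2 : ℕ) : ℤ) - 2 * m := by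
    haveI : NeZero n := ⟨by omega⟩
    exact (ZMod.intCast_zmod_eq_zero_iff_dvd _ n).mp hpr.symm
  have hdvdnat : n ∣ (((n - 2 : ℕ) : ℤ) - 2 * m).natAbs := by
    have := Int.natAbs_dvd_natAbs.mpr hdvd
    simpa using this
  obtain ⟨w, hw⟩ := ho
  rw [hca] at hm
  have habs : (((n - 2 : ℕ) : ℤ) - 2 * m).natAbs ≤ n - 2 := by omega
  have h0 : (((n - 2 : ℕ) : ℤ) - 2 * m).natAbs = 0 := by
    by_contra h
    have := Nat.le_of_dvd (by omega) hdvdnat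
    omega
  omega

lemma T_prodone (hn : 3 ≤ n) :
    IsProductOne (Multiset.replicate (2 * n - 2) (r (1 : ZMod n)) +
      Multiset.replicate 2 (sr 0)) := by
  refine ⟨List.replicate (n - 1) (r 1) ++ [sr 0] ++ (List.replicate (n - 1) (r 1) ++ [sr 0]),
    ?_, ?_⟩
  · rw [← Multiset.coe_add, ← Multiset.coe_add, Multiset.coe_replicate]
    have h1 : Multiset.replicate (2 * n - 2) (r (1 : ZMod n)) =
        Multiset.replicate (n - 1) (r 1) + Multiset.replicate (n - 1) (r 1) := by
      rw [← Multiset.replicate_add]; congr 1; omega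
    have h2 : (↑[sr (0 : ZMod n)] : Multiset (DihedralGroup n)) =
        Multiset.replicate 1 (sr 0) := by simp
    have h3 : Multiset.replicate 2 (sr (0 : ZMod n)) =
        Multiset.replicate 1 (sr 0) + Multiset.replicate 1 (sr 0) := by
      rw [← Multiset.replicate_add]
    rw [h1, h2, h3]
    simp only [add_comm, add_left_comm, add_assoc]
  · rw [List.prod_append, List.prod_append, List.prod_replicate, r_one_pow]
    simp [← one_def]

lemma T_atom (hn : 3 ≤ n) (ho : Odd n) :
    IsPOAtom (Multiset.replicate (2 * n - 2) (r (1 : ZMod n)) +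
      Multiset.replicate 2 (sr 0)) := by
  refine ⟨?_, T_prodone hn, ?_⟩
  · intro h
    have := congrArg Multiset.card h
    simp at this
  have main : ∀ X Y : Multiset (DihedralGroup n), IsProductOne X → IsProductOne Y →
      X + Y = Multiset.replicate (2 * n - 2) (r (1 : ZMod n)) + Multiset.replicate 2 (sr 0) →
      X ≠ 0 → X.count (sr (0 : ZMod n)) = 0 → Y.count (sr (0 : ZMod n)) = 2 → False := by
    intro X Y hX hY hXY hX0 hXc hYc
    have hmemX : ∀ x ∈ X, x = r 1 ∨ x = sr 0 := by
      intro x hx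
      have : x ∈ X + Y := Multiset.mem_add.mpr (Or.inl hx)
      rw [hXY] at this
      rcases Multiset.mem_add.mp this with h | h
      · exact Or.inl (Multiset.eq_of_mem_replicate h)
      · exact Or.inr (Multiset.eq_of_mem_replicate h)
    have hmemY : ∀ x ∈ Y, x = r 1 ∨ x = sr 0 := by
      intro x hx
      have : x ∈ X + Y := Multiset.mem_add.mpr (Or.inr hx)
      rw [hXY] at this
      rcases Multiset.mem_add.mp this with h | h
      · exact Or.inl (Multiset.eq_of_mem_replicate h)
      · exact Or.inr (Multiset.eq_of_mem_replicate h)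
    have hXd := two_elt_decomp r1_ne_sr0 X hmemX
    have hYd := two_elt_decomp r1_ne_sr0 Y hmemY
    rw [hXc] at hXd
    simp only [Multiset.replicate_zero, add_zero] at hXd
    have hsums : X.count (r (1 : ZMod n)) + Y.count (r (1 : ZMod n)) = 2 * n - 2 := by
      have := congrArg (Multiset.count (r (1 : ZMod n))) hXY
      rwa [Multiset.count_add, Multiset.count_add, Multiset.count_replicate, if_pos rfl,
        Multiset.count_replicate, if_neg sr0_ne_r1, add_zero] at this
    have hdvd : n ∣ X.count (r (1 : ZMod n)) := prodone_rep_a hn (hXd ▸ hX)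
    have hXpos : 1 ≤ X.count (r (1 : ZMod n)) := by
      by_contra h
      push_neg at h
      apply hX0
      rw [hXd]
      have : X.count (r (1 : ZMod n)) = 0 := by omega
      rw [this]
      simp
    have hle : n ≤ X.count (r (1 : ZMod n)) := Nat.le_of_dvd (by omega) hdvd
    have hXn : X.count (r (1 : ZMod n)) = n := by
      obtain ⟨c, hc⟩ := hdvd
      have hub : X.count (r (1 : ZMod n)) ≤ 2 * n - 2 := by omega
      have hcle : c ≤ 1 := by
        by_contra hcon
        push_neg at hcon
        have h2n : 2 * n ≤ n * c := by
          calc 2 * n = n * 2 := by ring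
          _ ≤ n * c := Nat.mul_le_mul_left n hcon
        omega
      have hcge : 1 ≤ c := by
        by_contra hcon
        push_neg at hcon
        have : c = 0 := by omega
        rw [this, Nat.mul_zero] at hc
        omega
      have hc1 : c = 1 := by omega
      rw [hc1, Nat.mul_one] at hc
      exact hc
    have hYn : Y.count (r (1 : ZMod n)) = n - 2 := by omega
    rw [hYn, hYc] at hYd
    exact Tsmall_not_prodone hn ho (hYd ▸ hY)
  intro T V hT hV hTV
  by_contra hc
  push_neg at hc
  obtain ⟨hT0, hV0⟩ := hc
  have hbc : T.count (sr (0 : ZMod n)) + V.count (sr (0 : ZMod n)) = 2 := by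
    have := congrArg (Multiset.count (sr (0 : ZMod n))) hTV
    rwa [Multiset.count_add, Multiset.count_add, Multiset.count_replicate,
      if_neg r1_ne_sr0, Multiset.count_replicate, if_pos rfl, zero_add] at this
  have hmemT : ∀ x ∈ T, x = r 1 ∨ x = sr 0 := by
    intro x hx
    have : x ∈ T + V := Multiset.mem_add.mpr (Or.inl hx)
    rw [hTV] at this
    rcases Multiset.mem_add.mp this with h | h
    · exact Or.inl (Multiset.eq_of_mem_replicate h)
    · exact Or.inr (Multiset.eq_of_mem_replicate h)
  have hTeven : Even (T.count (sr (0 : ZMod n))) := by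
    by_contra h
    exact odd_b_not_prodone hn hmemT h hT
  have hcases : T.count (sr (0 : ZMod n)) = 0 ∨ T.count (sr (0 : ZMod n)) = 2 := by
    rw [Nat.even_iff] at hTeven
    omega
  rcases hcases with h | h
  · exact main T V hT hV hTV hT0 h (by omega)
  · exact main V T hV hT (by rw [add_comm]; exact hTV) hV0 (by omega) h
end Part2

section Part3
open DihedralGroup
variable {n : ℕ}

lemma rm1_ne_one (hn : 3 ≤ n) : (r (-1) : DihedralGroup n) ≠ 1 := by
  intro h
  rw [one_def] at h
  simp only [r.injEq] at h
  have h1 : ((1 : ℕ) : ZMod n) = 0 := by push_cast; linear_combination -h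
  have := cast_nat_dvd hn h1
  have := Nat.le_of_dvd one_pos this
  omega

lemma map_inv_T :
    ((Multiset.replicate (2 * n - 2) (r (1 : ZMod n)) + Multiset.replicate 2 (sr 0)).map
      (fun g => g⁻¹)) = Multiset.replicate (2 * n - 2) (r (-1)) + Multiset.replicate 2 (sr 0) := by
  rw [Multiset.map_add, Multiset.map_replicate, Multiset.map_replicate]
  rfl

lemma atom_rep_n_ainv (hn : 3 ≤ n) : IsPOAtom (Multiset.replicate n (r (-1 : ZMod n))) := by
  have h := isPOAtom_map_inv (atom_rep_n_a hn)
  rwa [Multiset.map_replicate] at h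

lemma atom_pair_a (hn : 3 ≤ n) : IsPOAtom ((r (1 : ZMod n)) ::ₘ {r (-1)}) := by
  refine atom_pair (r1_ne_one hn) (rm1_ne_one hn) ?_
  rw [r_mul_r, one_def]
  congr 1
  ring

lemma part3 (hn : 3 ≤ n) (ho : Odd n) :
    ({2, n + 2, 2 * n} : Set ℕ) ⊆ lengthSet
      (Multiset.replicate (2 * n - 2) (r (1 : ZMod n)) + Multiset.replicate 2 (sr 0) +
        (Multiset.replicate (2 * n - 2) (r (1 : ZMod n)) + Multiset.replicate 2 (sr 0)).map
          (fun g => g⁻¹)) := by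
  rw [map_inv_T]
  intro k hk
  rcases hk with rfl | rfl | rfl
  · -- k = 2 : [T, T⁻¹]
    refine ⟨[Multiset.replicate (2 * n - 2) (r (1 : ZMod n)) + Multiset.replicate 2 (sr 0),
      Multiset.replicate (2 * n - 2) (r (-1 : ZMod n)) + Multiset.replicate 2 (sr 0)],
      rfl, ?_, ?_⟩
    · intro A hA
      rcases List.mem_cons.mp hA with rfl | hA
      · exact T_atom hn ho
      · rcases List.mem_cons.mp hA with rfl | hA
        · have h := isPOAtom_map_inv (T_atom hn ho)
          rwa [map_inv_T] at h
        · simp at hA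
    · simp
  · -- k = n + 2
    refine ⟨[Multiset.replicate n (r (1 : ZMod n)), Multiset.replicate n (r (-1 : ZMod n)),
        Multiset.replicate 2 (sr 0), Multiset.replicate 2 (sr 0)] ++
        List.replicate (n - 2) ((r (1 : ZMod n)) ::ₘ {r (-1)}), ?_, ?_, ?_⟩
    · simp only [List.length_append, List.length_cons, List.length_nil, List.length_replicate]
      omega
    · intro A hA
      rcases List.mem_append.mp hA with h | h
      · rcases List.mem_cons.mp h with rfl | h
        · exact atom_rep_n_a hn
        · rcases List.mem_cons.mp h with rfl | h
          · exact atom_rep_n_ainv hn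
          · rcases List.mem_cons.mp h with rfl | h
            · exact isPOAtom_rep2 (sr_ne_one 0) (sr_mul_self 0)
            · rcases List.mem_cons.mp h with rfl | h
              · exact isPOAtom_rep2 (sr_ne_one 0) (sr_mul_self 0)
              · simp at h
      · rw [List.eq_of_mem_replicate h]
        exact atom_pair_a hn
    · rw [List.sum_append, sum_replicate_pair]
      have h1 : Multiset.replicate (2 * n - 2) (r (1 : ZMod n)) =
          Multiset.replicate n (r 1) + Multiset.replicate (n - 2) (r 1) := by
        rw [← Multiset.replicate_add]; congr 1; omega
      have h2 : Multiset.replicate (2 * n - 2) (r (-1 : ZMod n)) =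
          Multiset.replicate n (r (-1)) + Multiset.replicate (n - 2) (r (-1)) := by
        rw [← Multiset.replicate_add]; congr 1; omega
      rw [h1, h2]
      simp only [List.sum_cons, List.sum_nil, add_zero]
      simp only [add_comm, add_left_comm, add_assoc]
  · -- k = 2 * n
    refine ⟨List.replicate (2 * n - 2) ((r (1 : ZMod n)) ::ₘ {r (-1)}) ++
        [Multiset.replicate 2 (sr (0 : ZMod n)), Multiset.replicate 2 (sr 0)], ?_, ?_, ?_⟩
    · simp only [List.length_append, List.length_cons, List.length_nil, List.length_replicate]
      omega
    · intro A hA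
      rcases List.mem_append.mp hA with h | h
      · rw [List.eq_of_mem_replicate h]
        exact atom_pair_a hn
      · rcases List.mem_cons.mp h with rfl | h
        · exact isPOAtom_rep2 (sr_ne_one 0) (sr_mul_self 0)
        · rcases List.mem_cons.mp h with rfl | h
          · exact isPOAtom_rep2 (sr_ne_one 0) (sr_mul_self 0)
          · simp at h
    · rw [List.sum_append, sum_replicate_pair]
      simp only [List.sum_cons, List.sum_nil, add_zero]
      simp only [add_comm, add_left_comm, add_assoc]

end Part3

open DihedralGroup

theorem stmt16 (n : ℕ) (hn : 3 ≤ n) (ho : Odd n)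
    (a b : DihedralGroup n) (ha : a = DihedralGroup.r 1) (hb : b = DihedralGroup.sr 0)
    (S T : Multiset (DihedralGroup n))
    (hS : S = Multiset.replicate n b + Multiset.replicate n (a * b))
    (hT : T = Multiset.replicate (2 * n - 2) a + Multiset.replicate 2 b) :
    lengthSet (S + S) = {2, 2 * n} ∧
    IsPOAtom T ∧
    ({2, n + 2, 2 * n} : Set ℕ) ⊆ lengthSet (T + T.map (fun g => g⁻¹)) ∧
    (∃ W : Multiset (DihedralGroup n), IsProductOne W ∧
      ({2, 2 * n} : Set ℕ) ⊂ lengthSet W) := by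
  subst ha hb
  have hab : (r 1 : DihedralGroup n) * sr 0 = sr (-1) := by
    rw [r_mul_sr]; congr 1; ring
  rw [hab] at hS
  subst hS hT
  refine ⟨part1_s16 hn ho, T_atom hn ho, part3 hn ho, ?_⟩
  refine ⟨Multiset.replicate (2 * n - 2) (r (1 : ZMod n)) + Multiset.replicate 2 (sr 0) +
      (Multiset.replicate (2 * n - 2) (r (1 : ZMod n)) + Multiset.replicate 2 (sr 0)).map
        (fun g => g⁻¹),
    isProductOne_add (T_prodone hn) (isProductOne_map_inv (T_prodone hn)), ?_⟩
  have hsub : ({2, 2 * n} : Set ℕ) ⊆ ({2, n + 2, 2 * n} : Set ℕ) := by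
    intro k hk
    rcases hk with rfl | rfl
    · left; rfl
    · right; right; rfl
  refine (Set.ssubset_iff_of_subset (hsub.trans (part3 hn ho))).mpr ⟨n + 2, ?_, ?_⟩
  · exact part3 hn ho (by right; left; rfl)
  · intro hmem
    rcases hmem with h | h
    · omega
    · rw [Set.mem_singleton_iff] at h
      omega
end
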